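/- arXiv:2210.03368 — 6 statements merged into one kernel-verified Lean document; each statement's English description precedes it below -/
import Mathlib

section
/- Under the ISS-Lyapunov assumption, let ν > 0 and, for each i ∈ {1,…,N}, let σᵢ* > 0 and cᵢ* ≥ 0 satisfy σᵢ*cᵢ* < 1, let dᵢ > dᵢ* := σᵢ*/(1−σᵢ*cᵢ*), and let εᵢ* > 0 satisfy Σ_{i=1}^N (1+dᵢcᵢ*)εᵢ* ≤ ν. Let αᵢ be any class-K∞ function, σᵢ ∈ [0,σᵢ*], cᵢ ∈ [0,cᵢ*], εᵢ ∈ (0,εᵢ*], bᵢ ∈ [0,1], and set δᵢ := dᵢ − σᵢ*(1+dᵢcᵢ*). Then: (a) δᵢ > 0 for every i; (b) for all x, z, u, v, e = (e₁,…,e_N) and all η ∈ ℝ^N with ηᵢ ≥ 0 satisfying the flow-set condition γᵢ(|eᵢ|) ≤ σᵢαᵢ(ηᵢ) + εᵢ for every i, one has ⟨∇V(x,z), (f_p(x,u,v), f_o(z,u,h(x)+e, h(ψ(z))))⟩ + Σ_{i=1}^N dᵢ(−αᵢ(ηᵢ) + cᵢγᵢ(|eᵢ|)) ≤ −α(V(x,z))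 − Σ_{i=1}^N δᵢαᵢ(ηᵢ) + ν + θ(|v|); and (c) for every k ∈ {1,…,N} and all x, z, η with ηᵢ ≥ 0, V(x,z) + Σ_{i≠k} dᵢηᵢ + d_k b_k η_k ≤ V(x,z) + Σ_{i=1}^N dᵢηᵢ (non-increase of U across a transmission of node k). -/
open Real Filter MeasureTheory

/-- A class-K∞ function: continuous, strictly increasing and unbounded on `[0,∞)`
with value `0` at `0`. -/
def ClassKInf (f : ℝ → ℝ) : Prop :=
  ContinuousOn f (Set.Ici 0) ∧ StrictMonoOn f (Set.Ici 0) ∧ f 0 = 0 ∧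
  Filter.Tendsto f Filter.atTop Filter.atTop

lemma classKInf_nonneg {f : ℝ → ℝ} (hf : ClassKInf f) {t : ℝ} (ht : 0 ≤ t) : 0 ≤ f t := by
  obtain ⟨-, hmono, h0, -⟩ := hf
  rcases eq_or_lt_of_le ht with h | h
  · simp [← h, h0]
  · have := hmono (Set.self_mem_Ici) (Set.mem_Ici.2 ht) h
    linarith [h0]

/-- Theorem 1 of the paper, items (i)–(iii) as stated: positivity of δᵢ, the flow
inequality `⟨∇U(q),F(q,w)⟩ ≤ −α(V) − Σ δᵢαᵢ(ηᵢ) + ν + θ(|v|)` on the flow set,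
and non-increase of `U` across a transmission of any node `k`. -/
theorem stmt1
    (N nx nz nu nv : ℕ) (hN : 0 < N) (ny : Fin N → ℕ)
    (fp : EuclideanSpace ℝ (Fin nx) → EuclideanSpace ℝ (Fin nu) →
      EuclideanSpace ℝ (Fin nv) → EuclideanSpace ℝ (Fin nx))
    (fo : EuclideanSpace ℝ (Fin nz) → EuclideanSpace ℝ (Fin nu) →
      (PiLp 2 fun i : Fin N => EuclideanSpace ℝ (Fin (ny i))) →
      (PiLp 2 fun i : Fin N => EuclideanSpace ℝ (Fin (ny i))) →
      EuclideanSpace ℝ (Fin nz))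
    (h : EuclideanSpace ℝ (Fin nx) →
      PiLp 2 fun i : Fin N => EuclideanSpace ℝ (Fin (ny i)))
    (ψ : EuclideanSpace ℝ (Fin nz) → EuclideanSpace ℝ (Fin nx))
    (ψR : EuclideanSpace ℝ (Fin nx) → EuclideanSpace ℝ (Fin nz))
    -- ISS-Lyapunov assumption (Assumption 2)
    (V : EuclideanSpace ℝ (Fin nx) × EuclideanSpace ℝ (Fin nz) → ℝ)
    (αlow αup α θ : ℝ → ℝ) (γ : Fin N → ℝ → ℝ)
    (hV1 : ContDiff ℝ 1 V) (hV0 : ∀ p, 0 ≤ V p)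
    (hαlow : ClassKInf αlow) (hαup : ClassKInf αup) (hα : ClassKInf α)
    (hθ : ClassKInf θ) (hγ : ∀ i, ClassKInf (γ i))
    (hVb : ∀ (x : EuclideanSpace ℝ (Fin nx)) (z : EuclideanSpace ℝ (Fin nz)),
      αlow ‖x - ψ z‖ ≤ V (x, z) ∧ V (x, z) ≤ αup ‖ψR x - z‖)
    (hVflow : ∀ (x : EuclideanSpace ℝ (Fin nx)) (z : EuclideanSpace ℝ (Fin nz))
      (u : EuclideanSpace ℝ (Fin nu)) (v : EuclideanSpace ℝ (Fin nv))
      (e : PiLp 2 fun i : Fin N => EuclideanSpace ℝ (Fin (ny i))),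
      fderiv ℝ V (x, z) (fp x u v, fo z u (h x + e) (h (ψ z))) ≤
        -α (V (x, z)) + (∑ i, γ i ‖e i‖) + θ ‖v‖)
    -- parameter selection of Theorem 1
    (ν : ℝ) (hν : 0 < ν)
    (σs cs d εs : Fin N → ℝ)
    (hσs : ∀ i, 0 < σs i) (hcs : ∀ i, 0 ≤ cs i) (hσscs : ∀ i, σs i * cs i < 1)
    (hd : ∀ i, σs i / (1 - σs i * cs i) < d i)
    (hεs : ∀ i, 0 < εs i) (hεν : ∑ i, (1 + d i * cs i) * εs i ≤ ν)
    (αi : Fin N → ℝ → ℝ) (hαi : ∀ i, ClassKInf (αi i))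
    (σ c ε b : Fin N → ℝ)
    (hσ : ∀ i, σ i ∈ Set.Icc 0 (σs i)) (hc : ∀ i, c i ∈ Set.Icc 0 (cs i))
    (hε : ∀ i, ε i ∈ Set.Ioc 0 (εs i)) (hb : ∀ i, b i ∈ Set.Icc 0 1)
    (δ : Fin N → ℝ) (hδ : ∀ i, δ i = d i - σs i * (1 + d i * cs i)) :
    -- (a) positivity of δᵢ
    (∀ i, 0 < δ i) ∧
    -- (b) flow inequality on the flow set
    (∀ (x : EuclideanSpace ℝ (Fin nx)) (z : EuclideanSpace ℝ (Fin nz))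
      (u : EuclideanSpace ℝ (Fin nu)) (v : EuclideanSpace ℝ (Fin nv))
      (e : PiLp 2 fun i : Fin N => EuclideanSpace ℝ (Fin (ny i)))
      (η : Fin N → ℝ), (∀ i, 0 ≤ η i) →
      (∀ i, γ i ‖e i‖ ≤ σ i * αi i (η i) + ε i) →
      fderiv ℝ V (x, z) (fp x u v, fo z u (h x + e) (h (ψ z))) +
          ∑ i, d i * (-(αi i (η i)) + c i * γ i ‖e i‖) ≤
        -α (V (x, z)) - (∑ i, δ i * αi i (η i)) + ν + θ ‖v‖) ∧
    -- (c) non-increase of U at a transmission of node k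
    (∀ (k : Fin N) (x : EuclideanSpace ℝ (Fin nx)) (z : EuclideanSpace ℝ (Fin nz))
      (η : Fin N → ℝ), (∀ i, 0 ≤ η i) →
      V (x, z) + (∑ i ∈ Finset.univ.erase k, d i * η i) + d k * b k * η k ≤
        V (x, z) + ∑ i, d i * η i) := by
  have hδpos : ∀ i, 0 < δ i := by
    intro i
    have h1 : 0 < 1 - σs i * cs i := by linarith [hσscs i]
    have := hd i
    rw [div_lt_iff₀ h1] at this
    rw [hδ i]; nlinarith
  have hdpos : ∀ i, 0 < d i := by
    intro i
    have h1 : 0 < 1 - σs i * cs i := by linarith [hσscs i]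
    have h2 : 0 < σs i / (1 - σs i * cs i) := div_pos (hσs i) h1
    linarith [hd i]
  refine ⟨hδpos, ?_, ?_⟩
  · intro x z u v e η hη hflow
    have key : ∀ i, γ i ‖e i‖ + d i * (-(αi i (η i)) + c i * γ i ‖e i‖) ≤
        -(δ i * αi i (η i)) + (1 + d i * cs i) * εs i := by
      intro i
      have hA : 0 ≤ αi i (η i) := classKInf_nonneg (hαi i) (hη i)
      have hg : 0 ≤ γ i ‖e i‖ := classKInf_nonneg (hγ i) (norm_nonneg _)
      have hfl := hflow i
      obtain ⟨hσ0, hσ1⟩ := hσ i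
      obtain ⟨hc0, hc1⟩ := hc i
      obtain ⟨hε0, hε1⟩ := hε i
      have hdi := (hdpos i).le
      rw [hδ i]
      nlinarith [mul_le_mul_of_nonneg_left hfl (mul_nonneg hdi hc0),
        mul_le_mul_of_nonneg_right hσ1 hA, mul_le_mul_of_nonneg_left hc1 hdi,
        mul_nonneg hdi hc0]
    have hsum : (∑ i, γ i ‖e i‖) + ∑ i, d i * (-(αi i (η i)) + c i * γ i ‖e i‖) ≤
        -(∑ i, δ i * αi i (η i)) + ν := by
      have h2 : (∑ i, (γ i ‖e i‖ + d i * (-(αi i (η i)) + c i * γ i ‖e i‖))) ≤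
          ∑ i, (-(δ i * αi i (η i)) + (1 + d i * cs i) * εs i) :=
        Finset.sum_le_sum fun i _ => key i
      simp only [Finset.sum_add_distrib, Finset.sum_neg_distrib] at h2
      linarith [hεν]
    linarith [hVflow x z u v e]
  · intro k x z η hη
    have : d k * b k * η k ≤ d k * η k := by
      obtain ⟨hb0, hb1⟩ := hb k
      nlinarith [mul_nonneg (mul_nonneg (hdpos k).le (hη k)) (sub_nonneg.2 hb1)]
    have hs : (∑ i, d i * η i) = (∑ i ∈ Finset.univ.erase k, d i * η i) + d k * η k := by
      rw [Finset.sum_erase_add _ _ (Finset.mem_univ k)]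
    linarith
end

section
/- Under the ISS-Lyapunov assumption and with parameters chosen as in Theorem 1 (ν > 0; σᵢ* > 0, cᵢ* ≥ 0 with σᵢ*cᵢ* < 1; dᵢ > σᵢ*/(1−σᵢ*cᵢ*); εᵢ* > 0 with Σ(1+dᵢcᵢ*)εᵢ* ≤ ν; σᵢ ∈ [0,σᵢ*], cᵢ ∈ [0,cᵢ*], εᵢ ∈ (0,εᵢ*]; αᵢ class-K∞; δᵢ := dᵢ − σᵢ*(1+dᵢcᵢ*)), define d̄ := max{d₁,…,d_N}, α_η(s) := min{δ₁α₁(s/(d̄N)), …, δ_Nα_N(s/(d̄N))} and α_U(s) := min{α(s/2), α_η(s/2)}. Then α_U is class-K∞ and, for all x, z, u, v, e = (e₁,…,e_N) and all η ∈ ℝ^N with ηᵢ ≥ 0 satisfying γᵢ(|eᵢ|) ≤ σᵢαᵢ(ηᵢ) + εᵢ for every i, ⟨∇V(x,z), (f_p(x,u,v), f_o(z,u,h(x)+e, h(ψ(z))))⟩ + Σ_{i=1}^N dᵢ(−αᵢ(ηᵢ) + cᵢγᵢ(|eᵢ|)) ≤ −α_U(V(x,z) + Σ_{i=1}^N dᵢηᵢ)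 + ν + θ(|v|). -/
open Real Filter MeasureTheory

lemma ClassKInf.nonneg' {f : ℝ → ℝ} (hf : ClassKInf f) {s : ℝ} (hs : 0 ≤ s) : 0 ≤ f s := by
  obtain ⟨_, hmono, h0, _⟩ := hf
  rcases eq_or_lt_of_le hs with hh | hh
  · simp [← hh, h0]
  · have := hmono Set.self_mem_Ici (Set.mem_Ici.2 hs) hh
    linarith

lemma ClassKInf.mono' {f : ℝ → ℝ} (hf : ClassKInf f) {a b : ℝ} (ha : 0 ≤ a) (hab : a ≤ b) :
    f a ≤ f b :=
  hf.2.1.monotoneOn (Set.mem_Ici.2 ha) (Set.mem_Ici.2 (ha.trans hab)) hab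

lemma ClassKInf.min' {f g : ℝ → ℝ} (hf : ClassKInf f) (hg : ClassKInf g) :
    ClassKInf (fun s => min (f s) (g s)) := by
  obtain ⟨hfc, hfm, hf0, hft⟩ := hf
  obtain ⟨hgc, hgm, hg0, hgt⟩ := hg
  refine ⟨fun x hx => (hfc x hx).min (hgc x hx), ?_, by simp [hf0, hg0], ?_⟩
  · intro a ha b hb hab
    exact lt_min ((min_le_left _ _).trans_lt (hfm ha hb hab))
      ((min_le_right _ _).trans_lt (hgm ha hb hab))
  · rw [tendsto_atTop] at hft hgt ⊢
    intro b
    filter_upwards [hft b, hgt b] with x h1 h2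
    exact le_min h1 h2

lemma ClassKInf.scale' {f : ℝ → ℝ} (hf : ClassKInf f) {a k : ℝ} (ha : 0 < a) (hk : 0 < k) :
    ClassKInf (fun s => a * f (s / k)) := by
  obtain ⟨hfc, hfm, hf0, hft⟩ := hf
  refine ⟨?_, ?_, by simp [hf0], ?_⟩
  · exact continuousOn_const.mul (hfc.comp (continuous_id.div_const k).continuousOn
      (fun x hx => Set.mem_Ici.2 (div_nonneg hx hk.le)))
  · intro x hx y hy hxy
    refine mul_lt_mul_of_pos_left ?_ ha
    exact hfm (Set.mem_Ici.2 (div_nonneg hx hk.le)) (Set.mem_Ici.2 (div_nonneg hy hk.le))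
      (by gcongr)
  · exact (hft.comp (tendsto_id.atTop_div_const hk)).const_mul_atTop ha

lemma classKInf_inf' {ι : Type*} {s : Finset ι} (hs : s.Nonempty) (f : ι → ℝ → ℝ)
    (hf : ∀ i ∈ s, ClassKInf (f i)) :
    ClassKInf (fun x => s.inf' hs fun i => f i x) := by
  induction hs using Finset.Nonempty.cons_induction with
  | singleton a =>
    simp only [Finset.inf'_singleton]
    exact hf a (Finset.mem_singleton_self a)
  | cons a t hat hts ih =>
    simp only [Finset.inf'_cons hts]
    exact (hf a (Finset.mem_cons_self a t)).min'
      (ih (fun i hi => hf i (Finset.mem_cons_of_mem hi)))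

set_option maxHeartbeats 1000000 in
/-- The merged flow inequality from the proof of Proposition 1:
`⟨∇U(q),F(q,w)⟩ ≤ −α_U(U(q)) + ν + θ(|v|)` on the flow set, where
`α_U(s) = min{α(s/2), α_η(s/2)}`, `α_η(s) = minᵢ δᵢαᵢ(s/(d̄N))`, `d̄ = maxᵢ dᵢ`. -/
theorem stmt2
    (N nx nz nu nv : ℕ) (hN : 0 < N) (ny : Fin N → ℕ)
    (fp : EuclideanSpace ℝ (Fin nx) → EuclideanSpace ℝ (Fin nu) →
      EuclideanSpace ℝ (Fin nv) → EuclideanSpace ℝ (Fin nx))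
    (fo : EuclideanSpace ℝ (Fin nz) → EuclideanSpace ℝ (Fin nu) →
      (PiLp 2 fun i : Fin N => EuclideanSpace ℝ (Fin (ny i))) →
      (PiLp 2 fun i : Fin N => EuclideanSpace ℝ (Fin (ny i))) →
      EuclideanSpace ℝ (Fin nz))
    (h : EuclideanSpace ℝ (Fin nx) →
      PiLp 2 fun i : Fin N => EuclideanSpace ℝ (Fin (ny i)))
    (ψ : EuclideanSpace ℝ (Fin nz) → EuclideanSpace ℝ (Fin nx))
    (ψR : EuclideanSpace ℝ (Fin nx) → EuclideanSpace ℝ (Fin nz))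
    -- ISS-Lyapunov assumption (Assumption 2)
    (V : EuclideanSpace ℝ (Fin nx) × EuclideanSpace ℝ (Fin nz) → ℝ)
    (αlow αup α θ : ℝ → ℝ) (γ : Fin N → ℝ → ℝ)
    (hV1 : ContDiff ℝ 1 V) (hV0 : ∀ p, 0 ≤ V p)
    (hαlow : ClassKInf αlow) (hαup : ClassKInf αup) (hα : ClassKInf α)
    (hθ : ClassKInf θ) (hγ : ∀ i, ClassKInf (γ i))
    (hVb : ∀ (x : EuclideanSpace ℝ (Fin nx)) (z : EuclideanSpace ℝ (Fin nz)),
      αlow ‖x - ψ z‖ ≤ V (x, z) ∧ V (x, z) ≤ αup ‖ψR x - z‖)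
    (hVflow : ∀ (x : EuclideanSpace ℝ (Fin nx)) (z : EuclideanSpace ℝ (Fin nz))
      (u : EuclideanSpace ℝ (Fin nu)) (v : EuclideanSpace ℝ (Fin nv))
      (e : PiLp 2 fun i : Fin N => EuclideanSpace ℝ (Fin (ny i))),
      fderiv ℝ V (x, z) (fp x u v, fo z u (h x + e) (h (ψ z))) ≤
        -α (V (x, z)) + (∑ i, γ i ‖e i‖) + θ ‖v‖)
    -- parameter selection of Theorem 1
    (ν : ℝ) (hν : 0 < ν)
    (σs cs d εs : Fin N → ℝ)
    (hσs : ∀ i, 0 < σs i) (hcs : ∀ i, 0 ≤ cs i) (hσscs : ∀ i, σs i * cs i < 1)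
    (hd : ∀ i, σs i / (1 - σs i * cs i) < d i)
    (hεs : ∀ i, 0 < εs i) (hεν : ∑ i, (1 + d i * cs i) * εs i ≤ ν)
    (αi : Fin N → ℝ → ℝ) (hαi : ∀ i, ClassKInf (αi i))
    (σ c ε b : Fin N → ℝ)
    (hσ : ∀ i, σ i ∈ Set.Icc 0 (σs i)) (hc : ∀ i, c i ∈ Set.Icc 0 (cs i))
    (hε : ∀ i, ε i ∈ Set.Ioc 0 (εs i)) (hb : ∀ i, b i ∈ Set.Icc 0 1)
    (δ : Fin N → ℝ) (hδ : ∀ i, δ i = d i - σs i * (1 + d i * cs i))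
    (dbar : ℝ)
    (hdbar : dbar = Finset.univ.sup'
      (Finset.univ_nonempty_iff.mpr (Fin.pos_iff_nonempty.mp hN)) d)
    (αU : ℝ → ℝ)
    (hαU : ∀ s : ℝ, αU s = min (α (s / 2))
      (Finset.univ.inf' (Finset.univ_nonempty_iff.mpr (Fin.pos_iff_nonempty.mp hN))
        (fun i => δ i * αi i (s / 2 / (dbar * (N : ℝ)))))) :
    ClassKInf αU ∧
    ∀ (x : EuclideanSpace ℝ (Fin nx)) (z : EuclideanSpace ℝ (Fin nz))
      (u : EuclideanSpace ℝ (Fin nu)) (v : EuclideanSpace ℝ (Fin nv))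
      (e : PiLp 2 fun i : Fin N => EuclideanSpace ℝ (Fin (ny i)))
      (η : Fin N → ℝ), (∀ i, 0 ≤ η i) →
      (∀ i, γ i ‖e i‖ ≤ σ i * αi i (η i) + ε i) →
      fderiv ℝ V (x, z) (fp x u v, fo z u (h x + e) (h (ψ z))) +
          ∑ i, d i * (-(αi i (η i)) + c i * γ i ‖e i‖) ≤
        -αU (V (x, z) + ∑ i, d i * η i) + ν + θ ‖v‖ := by
  have hne : (Finset.univ : Finset (Fin N)).Nonempty :=
    Finset.univ_nonempty_iff.mpr (Fin.pos_iff_nonempty.mp hN)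
  have hσscs1 : ∀ i, 0 < 1 - σs i * cs i := fun i => by linarith [hσscs i]
  have hdpos : ∀ i, 0 < d i := fun i =>
    lt_trans (div_pos (hσs i) (hσscs1 i)) (hd i)
  have hδpos : ∀ i, 0 < δ i := by
    intro i
    have h1 := hd i
    rw [div_lt_iff₀ (hσscs1 i)] at h1
    rw [hδ i]; nlinarith
  have hNpos : (0:ℝ) < (N : ℝ) := Nat.cast_pos.2 hN
  have hdbarpos : 0 < dbar := by
    rw [hdbar]
    obtain ⟨i⟩ := Fin.pos_iff_nonempty.mp hN
    exact lt_of_lt_of_le (hdpos i) (Finset.le_sup' d (Finset.mem_univ i))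
  have hK : 0 < dbar * (N : ℝ) := mul_pos hdbarpos hNpos
  have hαU1 : ClassKInf (fun s => α (s / 2)) := by
    have := hα.scale' (a := 1) (k := 2) one_pos two_pos
    simpa using this
  have hαU2 : ClassKInf (fun s : ℝ => Finset.univ.inf' hne
      (fun i => δ i * αi i (s / 2 / (dbar * (N : ℝ))))) := by
    refine classKInf_inf' hne (fun i s => δ i * αi i (s / 2 / (dbar * (N : ℝ)))) ?_
    intro i _
    have := (hαi i).scale' (hδpos i) (mul_pos two_pos hK)
    simp only [div_div]
    exact this
  have hαUK : ClassKInf αU := by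
    have hfe : αU = fun s => min (α (s / 2)) (Finset.univ.inf' hne
        (fun i => δ i * αi i (s / 2 / (dbar * (N : ℝ))))) := by
      funext s; rw [hαU s]
    rw [hfe]
    exact hαU1.min' hαU2
  refine ⟨hαUK, ?_⟩
  intro x z u v e η hη hγe
  set W := V (x, z) with hW
  have hW0 : 0 ≤ W := hV0 _
  set S := ∑ i, d i * η i with hSdef
  have hS0 : 0 ≤ S :=
    Finset.sum_nonneg fun i _ => mul_nonneg (hdpos i).le (hη i)
  have hsumδ : 0 ≤ ∑ i, δ i * αi i (η i) :=
    Finset.sum_nonneg fun i _ => mul_nonneg (hδpos i).le ((hαi i).nonneg' (hη i))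
  -- key claim
  have hclaim : αU (W + S) ≤ α W + ∑ i, δ i * αi i (η i) := by
    rcases le_total ((W + S) / 2) W with hc | hc
    · calc αU (W + S) ≤ α ((W + S) / 2) := by rw [hαU]; exact min_le_left _ _
        _ ≤ α W := hα.mono' (by linarith) hc
        _ ≤ α W + ∑ i, δ i * αi i (η i) := le_add_of_nonneg_right hsumδ
    · have hS2 : (W + S) / 2 ≤ S := by linarith
      obtain ⟨i, _, hi⟩ : ∃ i ∈ Finset.univ, S / (N : ℝ) ≤ d i * η i := by
        refine Finset.exists_le_of_sum_le hne ?_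
        rw [Finset.sum_const, Finset.card_univ, Fintype.card_fin, nsmul_eq_mul,
          mul_div_cancel₀ _ hNpos.ne']
      have hdle : d i ≤ dbar := hdbar ▸ Finset.le_sup' d (Finset.mem_univ i)
      have hηi : (W + S) / 2 / (dbar * (N : ℝ)) ≤ η i := by
        rw [div_le_iff₀ hK]
        have h1 : S ≤ d i * η i * (N : ℝ) := by
          have := mul_le_mul_of_nonneg_right hi hNpos.le
          rwa [div_mul_cancel₀ _ hNpos.ne'] at this
        have h2 : d i * η i * (N : ℝ) ≤ η i * (dbar * (N : ℝ)) := by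
          nlinarith [mul_nonneg (mul_nonneg (sub_nonneg.2 hdle) (hη i)) hNpos.le]
        linarith
      calc αU (W + S) ≤ Finset.univ.inf' hne
            (fun j => δ j * αi j ((W + S) / 2 / (dbar * (N : ℝ)))) := by
            rw [hαU]; exact min_le_right _ _
        _ ≤ δ i * αi i ((W + S) / 2 / (dbar * (N : ℝ))) :=
            Finset.inf'_le _ (Finset.mem_univ i)
        _ ≤ δ i * αi i (η i) := by
            refine mul_le_mul_of_nonneg_left ((hαi i).mono' ?_ hηi) (hδpos i).le
            exact div_nonneg (by linarith) hK.le
        _ ≤ ∑ j, δ j * αi j (η j) :=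
            Finset.single_le_sum
              (fun j _ => mul_nonneg (hδpos j).le ((hαi j).nonneg' (hη j)))
              (Finset.mem_univ i)
        _ ≤ α W + ∑ j, δ j * αi j (η j) :=
            le_add_of_nonneg_left (hα.nonneg' hW0)
  -- per-index inequality
  have hperi : ∀ i : Fin N,
      γ i ‖e i‖ + d i * (-(αi i (η i)) + c i * γ i ‖e i‖) ≤
        -(δ i * αi i (η i)) + (1 + d i * cs i) * εs i := by
    intro i
    have hG0 : 0 ≤ γ i ‖e i‖ := (hγ i).nonneg' (norm_nonneg _)
    have hA : 0 ≤ αi i (η i) := (hαi i).nonneg' (hη i)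
    obtain ⟨hσ0, hσle⟩ := hσ i
    obtain ⟨hc0, hcle⟩ := hc i
    obtain ⟨hε0, hεle⟩ := hε i
    have hGb := hγe i
    have hdp := hdpos i
    have hcs0 := hcs i
    have hσsp := hσs i
    have hdc0 : (0:ℝ) ≤ 1 + d i * c i := by nlinarith
    have h1 : (1 + d i * c i) * γ i ‖e i‖ ≤
        (1 + d i * c i) * (σ i * αi i (η i) + ε i) :=
      mul_le_mul_of_nonneg_left hGb hdc0
    have hdcc : 1 + d i * c i ≤ 1 + d i * cs i := by nlinarith [mul_le_mul_of_nonneg_left hcle hdp.le]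
    have h3 : σ i * (1 + d i * c i) ≤ σs i * (1 + d i * cs i) :=
      le_trans (mul_le_mul_of_nonneg_right hσle hdc0)
        (mul_le_mul_of_nonneg_left hdcc hσsp.le)
    have h4 : σ i * (1 + d i * c i) * αi i (η i) ≤
        σs i * (1 + d i * cs i) * αi i (η i) :=
      mul_le_mul_of_nonneg_right h3 hA
    have h5 : (1 + d i * c i) * ε i ≤ (1 + d i * cs i) * εs i := by
      exact mul_le_mul hdcc hεle hε0.le (by nlinarith)
    rw [hδ i]
    linarith [h1, h4, h5]
  have hsum : (∑ i, γ i ‖e i‖) + ∑ i, d i * (-(αi i (η i)) + c i * γ i ‖e i‖) ≤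
      -(∑ i, δ i * αi i (η i)) + ν := by
    have hle := Finset.sum_le_sum (fun i (_ : i ∈ Finset.univ) => hperi i)
    rw [Finset.sum_add_distrib, Finset.sum_add_distrib, Finset.sum_neg_distrib] at hle
    linarith [hεν]
  have hflow := hVflow x z u v e
  linarith [hclaim, hsum, hflow]
end

section
/- For every class-K∞ function α there exist a class-KL function β and a class-K∞ function γ such that: for every constant c ≥ 0, every T > 0, and every absolutely continuous function u : [0,T] → [0,∞) satisfying u′(t) ≤ −α(u(t)) + c for almost every t ∈ [0,T], one has u(t) ≤ β(u(0), t) + γ(c) for all t ∈ [0,T]. -/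
open Real Filter MeasureTheory

/-- A class-KL function. -/
def ClassKL (β : ℝ → ℝ → ℝ) : Prop :=
  (∀ t, 0 ≤ t → ContinuousOn (fun s => β s t) (Set.Ici 0) ∧
      StrictMonoOn (fun s => β s t) (Set.Ici 0) ∧ β 0 t = 0) ∧
  (∀ s, 0 ≤ s → AntitoneOn (fun t => β s t) (Set.Ici 0) ∧
      Filter.Tendsto (fun t => β s t) Filter.atTop (nhds 0))

noncomputable def Aext (α : ℝ → ℝ) : ℝ → ℝ := fun x => if x < 0 then x else α x

lemma Aext_eq_on {α : ℝ → ℝ} {x : ℝ} (hx : 0 ≤ x) : Aext α x = α x := by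
  simp [Aext, not_lt.2 hx]

lemma Aext_strictMono {α : ℝ → ℝ} (hα : ClassKInf α) : StrictMono (Aext α) := by
  obtain ⟨hc, hm, h0, ht⟩ := hα
  intro x y hxy
  unfold Aext
  rcases lt_or_ge x 0 with hx | hx
  · rcases lt_or_ge y 0 with hy | hy
    · simpa [hx, hy] using hxy
    · simp only [if_pos hx, if_neg (not_lt.2 hy)]
      calc x < 0 := hx
        _ = α 0 := h0.symm
        _ ≤ α y := hm.monotoneOn Set.self_mem_Ici hy hy
  · have hy : (0:ℝ) ≤ y := le_trans hx hxy.le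
    simp only [if_neg (not_lt.2 hx), if_neg (not_lt.2 hy)]
    exact hm hx hy hxy

lemma Aext_continuous {α : ℝ → ℝ} (hα : ClassKInf α) : Continuous (Aext α) := by
  obtain ⟨hc, hm, h0, ht⟩ := hα
  apply continuous_if
  · intro a ha
    have : a = 0 := by
      have := frontier_Iio (a := (0:ℝ)) ▸ (by simpa [Set.Iio] using ha : a ∈ frontier (Set.Iio (0:ℝ)))
      simpa using this
    simp [this, h0]
  · have : closure {x : ℝ | x < 0} = Set.Iic 0 := by
      simpa [Set.Iio] using closure_Iio (0:ℝ)
    rw [this]; exact continuous_id.continuousOn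
  · have : closure {x : ℝ | ¬ x < 0} = Set.Ici 0 := by
      simp only [not_lt]
      have : {x : ℝ | 0 ≤ x} = Set.Ici 0 := rfl
      rw [this, IsClosed.closure_eq isClosed_Ici]
    rw [this]; exact hc

lemma Aext_surjective {α : ℝ → ℝ} (hα : ClassKInf α) : Function.Surjective (Aext α) := by
  apply (Aext_continuous hα).surjective
  · apply Tendsto.congr' _ hα.2.2.2
    filter_upwards [eventually_ge_atTop (0:ℝ)] with x hx
    exact (Aext_eq_on hx).symm
  · apply Tendsto.congr' _ tendsto_id
    filter_upwards [eventually_lt_atBot (0:ℝ)] with x hx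
    simp [Aext, hx]

noncomputable def aiso (α : ℝ → ℝ) (hα : ClassKInf α) : ℝ ≃o ℝ :=
  StrictMono.orderIsoOfSurjective (Aext α) (Aext_strictMono hα) (Aext_surjective hα)

noncomputable def ainv (α : ℝ → ℝ) (hα : ClassKInf α) : ℝ → ℝ := fun y => (aiso α hα).symm y

lemma aiso_apply {α : ℝ → ℝ} (hα : ClassKInf α) (x : ℝ) : aiso α hα x = Aext α x := rfl

lemma Aext_ainv {α : ℝ → ℝ} (hα : ClassKInf α) (y : ℝ) : Aext α (ainv α hα y) = y :=
  (aiso α hα).apply_symm_apply y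

lemma ainv_nonneg {α : ℝ → ℝ} (hα : ClassKInf α) {y : ℝ} (hy : 0 ≤ y) : 0 ≤ ainv α hα y := by
  have h0 : Aext α 0 = 0 := by simpa [Aext_eq_on le_rfl] using hα.2.2.1
  have := Aext_ainv hα y
  by_contra h
  push_neg at h
  have := (Aext_strictMono hα) h
  rw [Aext_ainv hα y, h0] at this
  linarith

lemma alpha_ainv {α : ℝ → ℝ} (hα : ClassKInf α) {y : ℝ} (hy : 0 ≤ y) :
    α (ainv α hα y) = y := by
  rw [← Aext_eq_on (α := α) (ainv_nonneg hα hy), Aext_ainv hα]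

lemma ainv_zero {α : ℝ → ℝ} (hα : ClassKInf α) : ainv α hα 0 = 0 := by
  have h0 : Aext α 0 = 0 := by simpa [Aext_eq_on le_rfl] using hα.2.2.1
  have h1 : aiso α hα 0 = 0 := h0
  simp only [ainv]
  rw [OrderIso.symm_apply_eq, h1]

lemma ainv_strictMono {α : ℝ → ℝ} (hα : ClassKInf α) : StrictMono (ainv α hα) :=
  (aiso α hα).symm.strictMono

lemma ainv_continuous {α : ℝ → ℝ} (hα : ClassKInf α) : Continuous (ainv α hα) :=
  OrderIso.continuous (aiso α hα).symm

lemma ainv_tendsto {α : ℝ → ℝ} (hα : ClassKInf α) :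
    Tendsto (ainv α hα) atTop atTop := (aiso α hα).symm.tendsto_atTop

/-- ISS comparison lemma for scalar differential inequalities: for every class-K∞
function `α` there are `β ∈ KL` and `γ ∈ K∞` such that any nonnegative absolutely
continuous `u` on `[0,T]` (encoded by its a.e. derivative `g` via the integral
representation) with `u' ≤ −α(u) + c` a.e. satisfies `u(t) ≤ β(u(0),t) + γ(c)`. -/
theorem stmt3 (α : ℝ → ℝ) (hα : ClassKInf α) :
    ∃ β : ℝ → ℝ → ℝ, ∃ γ : ℝ → ℝ, ClassKL β ∧ ClassKInf γ ∧
      ∀ c : ℝ, 0 ≤ c → ∀ T : ℝ, 0 < T → ∀ u g : ℝ → ℝ,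
        (∀ t ∈ Set.Icc 0 T, 0 ≤ u t) →
        IntegrableOn g (Set.Icc 0 T) →
        (∀ t ∈ Set.Icc 0 T, u t = u 0 + ∫ s in (0:ℝ)..t, g s) →
        (∀ᵐ s ∂(volume.restrict (Set.Icc 0 T)), g s ≤ -α (u s) + c) →
        ∀ t ∈ Set.Icc 0 T, u t ≤ β (u 0) t + γ c := by
  classical
  have hαm : StrictMonoOn α (Set.Ici 0) := hα.2.1
  have hα0 : α 0 = 0 := hα.2.2.1
  refine ⟨fun s t => if t ≤ 0 then s else min s (ainv α hα ((2*s+2)/t)),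
         fun c => ainv α hα (2*c), ?_, ?_, ?_⟩
  · -- ClassKL
    constructor
    · intro t _
      by_cases h : t ≤ 0
      · simp only [if_pos h]
        exact ⟨continuousOn_id, strictMonoOn_id, by trivial⟩
      · push_neg at h
        simp only [if_neg (not_le.2 h)]
        refine ⟨?_, ?_, ?_⟩
        · exact (continuous_id.min ((ainv_continuous hα).comp (by continuity))).continuousOn
        · intro a _ b _ hab
          have h1 : ainv α hα ((2*a+2)/t) < ainv α hα ((2*b+2)/t) := by
            apply ainv_strictMono hα
            gcongr
          exact lt_min ((min_le_left _ _).trans_lt hab)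
            ((min_le_right _ _).trans_lt h1)
        · have : (0:ℝ) ≤ ainv α hα ((2*0+2)/t) := ainv_nonneg hα (by positivity)
          simp only [min_eq_left this]
    · intro s hs
      constructor
      · intro t₁ h₁ t₂ h₂ h12
        by_cases ha : t₁ ≤ 0
        · simp only [if_pos ha]
          by_cases hb : t₂ ≤ 0
          · simp only [if_pos hb]; exact le_rfl
          · simp only [if_neg hb]; exact min_le_left _ _
        · have hb : ¬ t₂ ≤ 0 := fun h => ha (h12.trans h)
          push_neg at ha hb
          simp only [if_neg (not_le.2 ha), if_neg (not_le.2 hb)]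
          apply min_le_min le_rfl
          apply (ainv_strictMono hα).monotone
          gcongr
      · have h1 : Tendsto (fun t : ℝ => (2*s+2)/t) atTop (nhds 0) :=
          tendsto_const_nhds.div_atTop tendsto_id
        have h2 : Tendsto (fun t : ℝ => ainv α hα ((2*s+2)/t)) atTop (nhds 0) := by
          have := ((ainv_continuous hα).tendsto 0).comp h1
          rwa [ainv_zero hα] at this
        apply squeeze_zero' ?_ ?_ h2
        · filter_upwards [eventually_gt_atTop (0:ℝ)] with t ht
          simp only [if_neg (not_le.2 ht)]
          exact le_min hs (ainv_nonneg hα (by positivity))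
        · filter_upwards [eventually_gt_atTop (0:ℝ)] with t ht
          simp only [if_neg (not_le.2 ht)]
          exact min_le_right _ _
  · -- ClassKInf γ
    refine ⟨((ainv_continuous hα).comp (by continuity)).continuousOn, ?_, ?_, ?_⟩
    · intro a _ b _ hab
      exact ainv_strictMono hα (by linarith)
    · simp only [mul_zero]; exact ainv_zero hα
    · exact (ainv_tendsto hα).comp (tendsto_id.const_mul_atTop two_pos)
  · -- main quantitative bound
    intro c hc T hT u g hu_nonneg hg_int hrep hae
    have hIccuIcc : Set.Icc (0:ℝ) T = Set.uIcc 0 T := (Set.uIcc_of_le hT.le).symm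
    have hInt : ∀ a ∈ Set.Icc (0:ℝ) T, ∀ b ∈ Set.Icc (0:ℝ) T,
        IntervalIntegrable g volume a b := by
      intro a ha b hb
      apply IntegrableOn.intervalIntegrable
      apply hg_int.mono_set
      rw [hIccuIcc] at ha hb ⊢
      exact Set.uIcc_subset_uIcc ha hb
    have hu_cont : ContinuousOn u (Set.Icc 0 T) := by
      have h1 : ContinuousOn (fun x => ∫ s in (0:ℝ)..x, g s) (Set.uIcc 0 T) :=
        intervalIntegral.continuousOn_primitive_interval (by rwa [← hIccuIcc])
      rw [hIccuIcc]
      exact (continuousOn_const.add h1).congr fun t ht => hrep t (by rwa [hIccuIcc])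
    have hdiff : ∀ a ∈ Set.Icc (0:ℝ) T, ∀ b ∈ Set.Icc (0:ℝ) T,
        u b - u a = ∫ s in a..b, g s := by
      intro a ha b hb
      have h0T : (0:ℝ) ∈ Set.Icc (0:ℝ) T := ⟨le_rfl, hT.le⟩
      have h := intervalIntegral.integral_interval_sub_left (hInt 0 h0T b hb) (hInt 0 h0T a ha)
      rw [hrep a ha, hrep b hb]
      linarith [h]
    -- invariance lemma
    have key_inv : ∀ M, 0 ≤ M → c ≤ α M → ∀ t₀ ∈ Set.Icc (0:ℝ) T, u t₀ ≤ M →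
        ∀ t₁ ∈ Set.Icc t₀ T, u t₁ ≤ M := by
      intro M hM hcM t₀ ht₀ hut₀ t₁ ht₁
      by_contra hcon
      push_neg at hcon
      have ht₁mem : t₁ ∈ Set.Icc (0:ℝ) T := ⟨le_trans ht₀.1 ht₁.1, ht₁.2⟩
      have hsubT : Set.Icc t₀ t₁ ⊆ Set.Icc (0:ℝ) T := Set.Icc_subset_Icc ht₀.1 ht₁.2
      set S := Set.Icc t₀ t₁ ∩ u ⁻¹' (Set.Iic M) with hS
      have hSne : S.Nonempty := ⟨t₀, ⟨le_rfl, ht₁.1⟩, hut₀⟩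
      have hSclosed : IsClosed S :=
        (hu_cont.mono hsubT).preimage_isClosed_of_isClosed isClosed_Icc isClosed_Iic
      have hSbdd : BddAbove S := BddAbove.mono Set.inter_subset_left bddAbove_Icc
      set τ := sSup S with hτdef
      have hτS : τ ∈ S := hSclosed.csSup_mem hSne hSbdd
      have hτmem : τ ∈ Set.Icc (0:ℝ) T := hsubT hτS.1
      have huτ : u τ ≤ M := hτS.2
      have hτlt : τ < t₁ := lt_of_le_of_ne hτS.1.2 (fun h => by rw [h] at huτ; linarith)
      have hgt : ∀ s ∈ Set.Ioc τ t₁, M < u s := by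
        intro s hs
        by_contra hle
        push_neg at hle
        have hsS : s ∈ S := ⟨⟨le_trans hτS.1.1 hs.1.le, hs.2⟩, hle⟩
        exact absurd (le_csSup hSbdd hsS) (not_le.2 hs.1)
      have hae2 : g ≤ᵐ[volume.restrict (Set.Icc τ t₁)] (fun _ => (0:ℝ)) := by
        have h2 := ae_restrict_of_ae_restrict_of_subset
          (Set.Icc_subset_Icc hτmem.1 ht₁.2) hae
        have h3 : ∀ᵐ s ∂(volume.restrict (Set.Icc τ t₁)), s ∈ Set.Ioc τ t₁ := by
          rw [← Measure.restrict_congr_set (Ioc_ae_eq_Icc)]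
          exact ae_restrict_mem measurableSet_Ioc
        filter_upwards [h2, h3] with s hs1 hs2
        have hus : (0:ℝ) ≤ u s := hu_nonneg s
          (Set.Icc_subset_Icc hτmem.1 ht₁.2 (Set.Ioc_subset_Icc_self hs2))
        have hmono : α M ≤ α (u s) := hαm.monotoneOn hM hus (hgt s hs2).le
        show g s ≤ 0
        linarith
      have hint : (∫ s in τ..t₁, g s) ≤ ∫ s in τ..t₁, (0:ℝ) :=
        intervalIntegral.integral_mono_ae_restrict hτlt.le
          (hInt τ hτmem t₁ ht₁mem) intervalIntegrable_const hae2
      rw [intervalIntegral.integral_zero] at hint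
      have hd := hdiff τ hτmem t₁ ht₁mem
      linarith
    -- decay lemma
    have key_dec : ∀ M δ, 0 ≤ M → c + δ ≤ α M → ∀ t ∈ Set.Icc (0:ℝ) T,
        (∀ s ∈ Set.Icc (0:ℝ) t, M ≤ u s) → u t ≤ u 0 - δ * t := by
      intro M δ hM hcM t ht hlo
      have hIccsub : Set.Icc (0:ℝ) t ⊆ Set.Icc 0 T := Set.Icc_subset_Icc le_rfl ht.2
      have hae2 : g ≤ᵐ[volume.restrict (Set.Icc (0:ℝ) t)] (fun _ => -δ) := by
        have h2 := ae_restrict_of_ae_restrict_of_subset hIccsub hae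
        have h3 : ∀ᵐ s ∂(volume.restrict (Set.Icc (0:ℝ) t)), s ∈ Set.Icc (0:ℝ) t :=
          ae_restrict_mem measurableSet_Icc
        filter_upwards [h2, h3] with s hs1 hs2
        have hus : (0:ℝ) ≤ u s := hu_nonneg s (hIccsub hs2)
        have hmono : α M ≤ α (u s) := hαm.monotoneOn hM hus (hlo s hs2)
        show g s ≤ -δ
        linarith
      have h0T : (0:ℝ) ∈ Set.Icc (0:ℝ) T := ⟨le_rfl, hT.le⟩
      have hint : (∫ s in (0:ℝ)..t, g s) ≤ ∫ s in (0:ℝ)..t, (-δ : ℝ) :=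
        intervalIntegral.integral_mono_ae_restrict ht.1
          (hInt 0 h0T t ht) intervalIntegrable_const hae2
      rw [intervalIntegral.integral_const, smul_eq_mul] at hint
      have hr := hrep t ht
      nlinarith [hint, hr]
    -- combined estimate
    have star : ∀ M, 0 ≤ M → 2*c ≤ α M → ∀ t ∈ Set.Icc (0:ℝ) T,
        u t ≤ max M (u 0 - (α M / 2) * t) := by
      intro M hM h2c t ht
      by_cases hcase : ∃ τ ∈ Set.Icc (0:ℝ) t, u τ ≤ M
      · obtain ⟨τ, hτ, hle⟩ := hcase
        have : u t ≤ M :=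
          key_inv M hM (by linarith) τ ⟨hτ.1, hτ.2.trans ht.2⟩ hle t ⟨hτ.2, ht.2⟩
        exact this.trans (le_max_left _ _)
      · push_neg at hcase
        have hdec := key_dec M (α M - c) hM (by linarith) t ht
          (fun s hs => (hcase s hs).le)
        refine le_trans ?_ (le_max_right _ _)
        have ht0 : 0 ≤ t := ht.1
        nlinarith [hdec]
    intro t ht
    have hs₀ : 0 ≤ u 0 := hu_nonneg 0 ⟨le_rfl, hT.le⟩
    have hgc0 : 0 ≤ ainv α hα (2*c) := ainv_nonneg hα (by linarith)
    have hαgc : α (ainv α hα (2*c)) = 2*c := alpha_ainv hα (by linarith)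
    by_cases htz : t ≤ 0
    · have ht0 : t = 0 := le_antisymm htz ht.1
      subst ht0
      simp only [le_refl, if_true]
      linarith
    · push_neg at htz
      simp only [if_neg (not_le.2 htz)]
      have bound1 : u t ≤ u 0 + ainv α hα (2*c) := by
        set M := max (u 0) (ainv α hα (2*c)) with hMdef
        have hM : (0:ℝ) ≤ M := le_max_of_le_right hgc0
        have h2c : 2*c ≤ α M := by
          rw [← hαgc]; exact hαm.monotoneOn hgc0 hM (le_max_right _ _)
        have h := star M hM h2c t ht
        have hαM0 : 0 ≤ α M := by
          have := hαm.monotoneOn (Set.self_mem_Ici) hM hM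
          linarith [hα0, hαm.monotoneOn Set.self_mem_Ici hM hM]
        have hmax1 : M ≤ u 0 + ainv α hα (2*c) := max_le (by linarith) (by linarith)
        have h2 : u 0 - α M / 2 * t ≤ u 0 + ainv α hα (2*c) := by nlinarith [ht.1]
        exact h.trans (max_le hmax1 h2)
      have bound2 : u t ≤ ainv α hα ((2*(u 0)+2)/t) + ainv α hα (2*c) := by
        set r := ainv α hα ((2*(u 0)+2)/t) with hrdef
        have hargr : 0 ≤ (2*(u 0)+2)/t := by positivity
        have hr0 : 0 ≤ r := ainv_nonneg hα hargr
        have hαr : α r = (2*(u 0)+2)/t := alpha_ainv hα hargr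
        set M := max r (ainv α hα (2*c)) with hMdef
        have hM : (0:ℝ) ≤ M := le_max_of_le_left hr0
        have h2c : 2*c ≤ α M := by
          rw [← hαgc]; exact hαm.monotoneOn hgc0 hM (le_max_right _ _)
        have hαrM : (2*(u 0)+2)/t ≤ α M := by
          rw [← hαr]; exact hαm.monotoneOn hr0 hM (le_max_left _ _)
        have h := star M hM h2c t ht
        have hcancel : (2*(u 0)+2)/t * t = 2*(u 0)+2 := div_mul_cancel₀ _ (ne_of_gt htz)
        have hkey : u 0 - α M / 2 * t ≤ -1 := by
          nlinarith [mul_le_mul_of_nonneg_right hαrM (le_of_lt htz)]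
        have hMle : u t ≤ M := h.trans (max_le le_rfl (hkey.trans (by linarith)))
        have : M ≤ r + ainv α hα (2*c) := max_le (by linarith) (by linarith)
        linarith
      rcases le_total (u 0) (ainv α hα ((2*(u 0)+2)/t)) with hmin | hmin
      · rw [min_eq_left hmin]; exact bound1
      · rw [min_eq_right hmin]; exact bound2
end

section
/- Suppose the ISS-Lyapunov assumption holds with linear decay α(s) = a·s for some a > 0. Let a_U ∈ (0, a] and μ > 0, and for each i ∈ {1,…,N}: let cᵢ ∈ [0,cᵢ*] and σᵢ ∈ [0,σᵢ*] with σᵢ*cᵢ* < 1; let αᵢ(s) = aᵢ·s with aᵢ ≥ aᵢ* and aᵢ* > a_U/(1−σᵢ*cᵢ*); set dᵢ := σᵢ*(1−σᵢ*cᵢ* − a_U/aᵢ*)^{-1} and ς := max{d₁c₁*, …, d_Nc_N*}; and let εᵢ ∈ (0,εᵢ*] with ε₁* + … + ε_N* ≤ a_U·μ/(1+ς). Then, for all x, z, u, v, e = (e₁,…,e_N) and all η ∈ ℝ^N with ηᵢ ≥ 0 satisfying the flow-set condition γᵢ(|eᵢ|) ≤ σᵢ·aᵢ·ηᵢ + εᵢ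 for every i, one has ⟨∇V(x,z), (f_p(x,u,v), f_o(z,u,h(x)+e, h(ψ(z))))⟩ + Σ_{i=1}^N dᵢ(−aᵢηᵢ + cᵢγᵢ(|eᵢ|)) ≤ −a_U·(V(x,z) + Σ_{i=1}^N dᵢηᵢ) + a_U·μ + θ(|v|). -/
open Real Filter MeasureTheory

set_option maxHeartbeats 2000000 in
/-- Flow inequality (34) in the proof of Theorem 2 (linear decay case):
under the ISS-Lyapunov assumption with `α(s) = a·s`, with the parameter choices of
Theorem 2, `⟨∇U(q),F(q,w)⟩ ≤ −a_U·U(q) + a_U·μ + θ(|v|)` on the flow set. -/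
theorem stmt5
    (N nx nz nu nv : ℕ) (hN : 0 < N) (ny : Fin N → ℕ)
    (fp : EuclideanSpace ℝ (Fin nx) → EuclideanSpace ℝ (Fin nu) →
      EuclideanSpace ℝ (Fin nv) → EuclideanSpace ℝ (Fin nx))
    (fo : EuclideanSpace ℝ (Fin nz) → EuclideanSpace ℝ (Fin nu) →
      (PiLp 2 fun i : Fin N => EuclideanSpace ℝ (Fin (ny i))) →
      (PiLp 2 fun i : Fin N => EuclideanSpace ℝ (Fin (ny i))) →
      EuclideanSpace ℝ (Fin nz))
    (h : EuclideanSpace ℝ (Fin nx) →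
      PiLp 2 fun i : Fin N => EuclideanSpace ℝ (Fin (ny i)))
    (ψ : EuclideanSpace ℝ (Fin nz) → EuclideanSpace ℝ (Fin nx))
    (ψR : EuclideanSpace ℝ (Fin nx) → EuclideanSpace ℝ (Fin nz))
    -- ISS-Lyapunov assumption (Assumption 2) with linear decay α(s) = a·s
    (V : EuclideanSpace ℝ (Fin nx) × EuclideanSpace ℝ (Fin nz) → ℝ)
    (αlow αup θ : ℝ → ℝ) (γ : Fin N → ℝ → ℝ) (a : ℝ) (ha : 0 < a)
    (hV1 : ContDiff ℝ 1 V) (hV0 : ∀ p, 0 ≤ V p)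
    (hαlow : ClassKInf αlow) (hαup : ClassKInf αup)
    (hθ : ClassKInf θ) (hγ : ∀ i, ClassKInf (γ i))
    (hVb : ∀ (x : EuclideanSpace ℝ (Fin nx)) (z : EuclideanSpace ℝ (Fin nz)),
      αlow ‖x - ψ z‖ ≤ V (x, z) ∧ V (x, z) ≤ αup ‖ψR x - z‖)
    (hVflow : ∀ (x : EuclideanSpace ℝ (Fin nx)) (z : EuclideanSpace ℝ (Fin nz))
      (u : EuclideanSpace ℝ (Fin nu)) (v : EuclideanSpace ℝ (Fin nv))
      (e : PiLp 2 fun i : Fin N => EuclideanSpace ℝ (Fin (ny i))),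
      fderiv ℝ V (x, z) (fp x u v, fo z u (h x + e) (h (ψ z))) ≤
        -(a * V (x, z)) + (∑ i, γ i ‖e i‖) + θ ‖v‖)
    -- parameter selection of Theorem 2
    (aU μ : ℝ) (haU : aU ∈ Set.Ioc 0 a) (hμ : 0 < μ)
    (σs cs : Fin N → ℝ)
    (hσs : ∀ i, 0 < σs i) (hcs : ∀ i, 0 ≤ cs i) (hσscs : ∀ i, σs i * cs i < 1)
    (σ c : Fin N → ℝ)
    (hσ : ∀ i, σ i ∈ Set.Icc 0 (σs i)) (hc : ∀ i, c i ∈ Set.Icc 0 (cs i))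
    (ais ai : Fin N → ℝ)
    (hais : ∀ i, aU / (1 - σs i * cs i) < ais i) (hai : ∀ i, ais i ≤ ai i)
    (d : Fin N → ℝ) (hd : ∀ i, d i = σs i * (1 - σs i * cs i - aU / ais i)⁻¹)
    (ς : ℝ)
    (hς : ς = Finset.univ.sup'
      (Finset.univ_nonempty_iff.mpr (Fin.pos_iff_nonempty.mp hN))
      (fun i => d i * cs i))
    (ε εs : Fin N → ℝ) (hε : ∀ i, ε i ∈ Set.Ioc 0 (εs i))
    (hεsum : ∑ i, εs i ≤ aU * μ / (1 + ς)) :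
    ∀ (x : EuclideanSpace ℝ (Fin nx)) (z : EuclideanSpace ℝ (Fin nz))
      (u : EuclideanSpace ℝ (Fin nu)) (v : EuclideanSpace ℝ (Fin nv))
      (e : PiLp 2 fun i : Fin N => EuclideanSpace ℝ (Fin (ny i)))
      (η : Fin N → ℝ), (∀ i, 0 ≤ η i) →
      (∀ i, γ i ‖e i‖ ≤ σ i * (ai i * η i) + ε i) →
      fderiv ℝ V (x, z) (fp x u v, fo z u (h x + e) (h (ψ z))) +
          ∑ i, d i * (-(ai i * η i) + c i * γ i ‖e i‖) ≤
        -(aU * (V (x, z) + ∑ i, d i * η i)) + aU * μ + θ ‖v‖ := by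
  intro x z u v e η hη hflow
  -- basic facts
  have hγ0 : ∀ i, 0 ≤ γ i ‖e i‖ := by
    intro i
    obtain ⟨_, hmono, h0, _⟩ := hγ i
    rcases eq_or_lt_of_le (norm_nonneg (e i)) with hh | hh
    · rw [← hh, h0]
    · have := hmono (Set.mem_Ici.mpr le_rfl) (Set.mem_Ici.mpr hh.le) hh
      linarith [h0]
  have hden : ∀ i, 0 < 1 - σs i * cs i - aU / ais i := by
    intro i
    have h1 : 0 < 1 - σs i * cs i := by linarith [hσscs i]
    have hAs : 0 < ais i := lt_trans (div_pos haU.1 h1) (hais i)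
    have := (div_lt_iff₀ h1).mp (hais i)
    have h2 : aU / ais i < 1 - σs i * cs i := by
      rw [div_lt_iff₀ hAs]; nlinarith
    linarith
  have hAspos : ∀ i, 0 < ais i := fun i =>
    lt_trans (div_pos haU.1 (by linarith [hσscs i])) (hais i)
  have hApos : ∀ i, 0 < ai i := fun i => lt_of_lt_of_le (hAspos i) (hai i)
  have hdpos : ∀ i, 0 < d i := by
    intro i; rw [hd i]; exact mul_pos (hσs i) (inv_pos.mpr (hden i))
  have hdid : ∀ i, d i * (1 - σs i * cs i - aU / ais i) = σs i := by
    intro i; rw [hd i, mul_assoc, inv_mul_cancel₀ (hden i).ne', mul_one]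
  have hdcς : ∀ i, d i * cs i ≤ ς := by
    intro i; rw [hς]
    exact Finset.le_sup' (fun j => d j * cs j) (Finset.mem_univ i)
  have hςpos : 0 ≤ ς := by
    obtain ⟨i⟩ := Fin.pos_iff_nonempty.mp hN
    exact le_trans (mul_nonneg (hdpos i).le (hcs i)) (hdcς i)
  -- per-index key bound
  have key : ∀ i, γ i ‖e i‖ + d i * (-(ai i * η i) + c i * γ i ‖e i‖)
      + aU * (d i * η i) ≤ (1 + ς) * εs i := by
    intro i
    obtain ⟨hσ0, hσ1⟩ := hσ i
    obtain ⟨hc0, hc1⟩ := hc i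
    obtain ⟨hε0, hε1⟩ := hε i
    have hG := hflow i
    have hD := hdpos i
    have hA := hApos i
    have hAs := hAspos i
    have hid := hdid i
    -- coefficient bound: σ*A*(1+D*C) + aU*D ≤ D*A
    have hcoef : σ i * ai i * (1 + d i * c i) + aU * d i ≤ d i * ai i := by
      have hstep : σ i * ai i * (1 + d i * c i) ≤ σs i * ai i * (1 + d i * cs i) := by
        have h1 : 1 + d i * c i ≤ 1 + d i * cs i := by nlinarith
        have h2 : σ i * ai i ≤ σs i * ai i := by nlinarith
        exact mul_le_mul h2 h1 (by nlinarith) (by nlinarith)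
      have hstep2 : σs i * ai i * (1 + d i * cs i) + aU * d i ≤ d i * ai i := by
        have hAA : ais i ≤ ai i := hai i
        have hidd : d i * (1 - σs i * cs i) = σs i + d i * aU / ais i := by
          linear_combination hid
        have h3 : ai i * (d i * aU / ais i) ≥ aU * d i := by
          have heq : ais i * (d i * aU / ais i) = d i * aU := by field_simp
          have hnn : 0 ≤ d i * aU / ais i := div_nonneg (mul_nonneg hD.le haU.1.le) hAs.le
          nlinarith [mul_le_mul_of_nonneg_right hAA hnn]
        nlinarith [hidd, h3]
      linarith
    have hDC : 0 < 1 + d i * c i := by nlinarith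
    have hGb : γ i ‖e i‖ * (1 + d i * c i) ≤
        (σ i * (ai i * η i) + ε i) * (1 + d i * c i) :=
      mul_le_mul_of_nonneg_right hG hDC.le
    have hdcςi : d i * c i ≤ ς :=
      le_trans (mul_le_mul_of_nonneg_left hc1 hD.le) (hdcς i)
    have hεb : ε i * (1 + d i * c i) ≤ εs i * (1 + ς) := by
      have hb1 : ε i * (1 + d i * c i) ≤ ε i * (1 + ς) :=
        mul_le_mul_of_nonneg_left (by linarith) hε0.le
      have hb2 : ε i * (1 + ς) ≤ εs i * (1 + ς) :=
        mul_le_mul_of_nonneg_right hε1 (by linarith)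
      linarith
    nlinarith [hGb, mul_le_mul_of_nonneg_right hcoef (hη i), hεb]
  -- sum the key bounds
  have hsum : ∑ i, (γ i ‖e i‖ + d i * (-(ai i * η i) + c i * γ i ‖e i‖)
      + aU * (d i * η i)) ≤ aU * μ := by
    calc ∑ i, (γ i ‖e i‖ + d i * (-(ai i * η i) + c i * γ i ‖e i‖)
        + aU * (d i * η i)) ≤ ∑ i, (1 + ς) * εs i :=
          Finset.sum_le_sum fun i _ => key i
      _ = (1 + ς) * ∑ i, εs i := by rw [Finset.mul_sum]
      _ ≤ (1 + ς) * (aU * μ / (1 + ς)) :=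
          mul_le_mul_of_nonneg_left hεsum (by linarith)
      _ = aU * μ := by field_simp
  have hL := hVflow x z u v e
  have hVnn := hV0 (x, z)
  have haUa := haU.2
  have haU0 := haU.1
  have hsplit : ∑ i, (γ i ‖e i‖ + d i * (-(ai i * η i) + c i * γ i ‖e i‖)
      + aU * (d i * η i)) = (∑ i, γ i ‖e i‖)
      + (∑ i, d i * (-(ai i * η i) + c i * γ i ‖e i‖))
      + aU * ∑ i, d i * η i := by
    rw [Finset.mul_sum, ← Finset.sum_add_distrib, ← Finset.sum_add_distrib]
  rw [hsplit] at hsum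
  linarith [hL, hsum, mul_le_mul_of_nonneg_right haUa hVnn]
end

section
/- Let n, N and n₁,…,n_N be positive integers and let f : ℝ^n × ℝ^{n₁} × … × ℝ^{n_N} → ℝ^n. Suppose there exist a continuously differentiable V : ℝ^n → [0,∞) and class-K∞ functions α̲_V, ᾱ_V, α, γ₁,…,γ_N such that for all x ∈ ℝ^n and all uᵢ ∈ ℝ^{n_i}: α̲_V(|x|) ≤ V(x) ≤ ᾱ_V(|x|) and ⟨∇V(x), f(x,u₁,…,u_N)⟩ ≤ −α(|x|) + Σ_{i=1}^N γᵢ(|uᵢ|). Let γ̃₁,…,γ̃_N be class-K∞ functions such that for each i, γᵢ(r) = O(γ̃ᵢ(r)) as r → ∞ (i.e., there exist Mᵢ > 0 and rᵢ ≥ 0 with γᵢ(r) ≤ Mᵢ·γ̃ᵢ(r) for all r ≥ rᵢ). Then there exist a continuously differentiable W : ℝ^n → [0,∞) and class-K∞ functions α̲_W, ᾱ_W, α̃ such that for all x ∈ ℝ^n and all uᵢ ∈ ℝ^{n_i}: α̲_W(|x|) ≤ W(x) ≤ ᾱ_W(|x|) and ⟨∇W(x), f(x,u₁,…,u_N)⟩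 ≤ −α̃(|x|) + Σ_{i=1}^N γ̃ᵢ(|uᵢ|). -/
open Real Filter MeasureTheory

/-!
Following Sontag, take `W = ρ ∘ V` with `ρ s = ∫₀ˢ p`, where `p` is continuous, nondecreasing
and positive on `(0, ∞)`, so that `∇W · f = p (V x) (∇V · f)`. It suffices that
`p (ᾱ_V s) γᵢ r ≤ γ̃ᵢ r` whenever `α s ≤ 2N γᵢ r`: for each input, either `γᵢ |uᵢ|` is at most
`α |x| / 2N`, or this inequality bounds `p (V x) γᵢ |uᵢ|` by `γ̃ᵢ |uᵢ|`; the new decay rate is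
`α̃ = (p ∘ α̲_V) α / 2`. Such a `p` exists because the admissible bounds `γ̃ᵢ r / γᵢ r` stay away
from `0` once `ᾱ_V s`, hence `s`, hence `r`, stays away from `0` (for large `r` by the
`O`-hypothesis, for `r` in a compact range by monotonicity).
-/

open Set

theorem LipschitzWith.ciInf {ι α : Type*} [Nonempty ι] [PseudoMetricSpace α] {K : NNReal}
    {f : ι → α → ℝ} (hf : ∀ i, LipschitzWith K (f i))
    (hbdd : ∀ x, BddBelow (range fun i => f i x)) :
    LipschitzWith K fun x => ⨅ i, f i x :=
  LipschitzWith.of_le_add_mul K fun x y => by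
    rw [← sub_le_iff_le_add]
    exact le_ciInf fun i => sub_le_iff_le_add.2 <|
      (ciInf_le (hbdd x) i).trans ((hf i).le_add_mul x y)

namespace ClassKInf

variable {g h : ℝ → ℝ}

theorem pos (hg : ClassKInf g) {r : ℝ} (hr : 0 < r) : 0 < g r := by
  simpa [hg.2.2.1] using hg.2.1 self_mem_Ici hr.le hr

theorem nonneg (hg : ClassKInf g) {r : ℝ} (hr : 0 ≤ r) : 0 ≤ g r := by
  rcases hr.eq_or_lt with rfl | hr
  · exact hg.2.2.1.ge
  · exact (hg.pos hr).le

theorem monotoneOn (hg : ClassKInf g) : MonotoneOn g (Ici 0) :=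
  hg.2.1.monotoneOn

theorem exists_pos_le_of_le (hg : ClassKInf g) {ε : ℝ} (hε : 0 < ε) :
    ∃ η > 0, ∀ r, 0 ≤ r → ε ≤ g r → η ≤ r := by
  obtain ⟨R, hR, hRε⟩ := ((hg.2.2.2.eventually_ge_atTop ε).and (eventually_ge_atTop 0)).exists
  obtain ⟨η, hη, hgη⟩ : ε ∈ g '' Icc 0 R :=
    intermediate_value_Icc hRε (hg.1.mono Icc_subset_Ici_self) ⟨by rw [hg.2.2.1]; exact hε.le, hR⟩
  refine ⟨η, hη.1.lt_of_ne ?_, fun r hr hεr => ?_⟩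
  · rintro rfl
    exact hε.ne (hg.2.2.1 ▸ hgη)
  · exact (hg.2.1.le_iff_le hη.1 hr).1 (hgη ▸ hεr)

theorem comp (hh : ClassKInf h) (hg : ClassKInf g) : ClassKInf (h ∘ g) := by
  refine ⟨hh.1.comp hg.1 fun t ht => hg.nonneg ht, fun a ha b hb hab => ?_, ?_,
    hh.2.2.2.comp hg.2.2.2⟩
  · exact hh.2.1 (hg.nonneg ha) (hg.nonneg hb) (hg.2.1 ha hb hab)
  · simp [Function.comp, hg.2.2.1, hh.2.2.1]

theorem mul_left (hg : ClassKInf g) {q : ℝ → ℝ} (hq : ContinuousOn q (Ici 0))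
    (hq_mono : MonotoneOn q (Ici 0)) (hq_pos : ∀ t, 0 < t → 0 < q t) :
    ClassKInf fun t => q t * g t := by
  refine ⟨hq.mul hg.1, fun a ha b hb hab => ?_, by simp [hg.2.2.1], ?_⟩
  · calc q a * g a ≤ q b * g a :=
          mul_le_mul_of_nonneg_right (hq_mono ha hb hab.le) (hg.nonneg ha)
      _ < q b * g b := mul_lt_mul_of_pos_left (hg.2.1 ha hb hab) (hq_pos b (ha.trans_lt hab))
  · refine tendsto_atTop_mono' atTop ?_ (hg.2.2.2.const_mul_atTop (hq_pos 1 one_pos))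
    filter_upwards [eventually_ge_atTop 1] with t ht
    exact mul_le_mul_of_nonneg_right (hq_mono (mem_Ici.2 zero_le_one)
      (mem_Ici.2 (zero_le_one.trans ht)) ht) (hg.nonneg (zero_le_one.trans ht))

theorem exists_mul_le (hg : ClassKInf g) (hh : ClassKInf h)
    (hO : ∃ M > (0:ℝ), ∃ r₀ ≥ (0:ℝ), ∀ r ≥ r₀, g r ≤ M * h r) {ε : ℝ} (hε : 0 < ε) :
    ∃ m > 0, ∀ r ≥ ε, m * g r ≤ h r := by
  obtain ⟨M, hM, r₀, -, hgh⟩ := hO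
  set R := max ε r₀
  have hR : 0 < R := hε.trans_le (le_max_left _ _)
  refine ⟨min (h ε / g R) M⁻¹, lt_min (div_pos (hh.pos hε) (hg.pos hR)) (inv_pos.2 hM),
    fun r hr => ?_⟩
  have hr0 : 0 ≤ r := hε.le.trans hr
  rcases le_total r R with hrR | hRr
  · calc min (h ε / g R) M⁻¹ * g r ≤ h ε / g R * g R :=
          mul_le_mul (min_le_left _ _) (hg.monotoneOn hr0 hR.le hrR) (hg.nonneg hr0)
            (div_pos (hh.pos hε) (hg.pos hR)).le
      _ = h ε := div_mul_cancel₀ _ (hg.pos hR).ne'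
      _ ≤ h r := hh.monotoneOn hε.le hr0 hr
  · calc min (h ε / g R) M⁻¹ * g r ≤ M⁻¹ * (M * h r) :=
          mul_le_mul (min_le_right _ _) (hgh r ((le_max_right _ _).trans hRr)) (hg.nonneg hr0)
            (inv_pos.2 hM).le
      _ = h r := inv_mul_cancel_left₀ hM.ne' _

end ClassKInf

section LipschitzMinorant

variable {S : Set (ℝ × ℝ)}

/-- The largest nondecreasing `1`-Lipschitz function `p` with `p 0 ≤ 0` and `p c.1 ≤ c.2`
for every `c ∈ S`. -/
noncomputable def lipschitzMinorant (S : Set (ℝ × ℝ)) (v : ℝ) : ℝ :=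
  ⨅ c : (insert 0 S : Set (ℝ × ℝ)), ((c : ℝ × ℝ).2 + max (v - (c : ℝ × ℝ).1) 0)

theorem snd_nonneg_of_mem_insert_zero (hS : ∀ c ∈ S, 0 ≤ c.2) {c : ℝ × ℝ}
    (hc : c ∈ insert 0 S) : 0 ≤ c.2 :=
  hc.elim (fun h => h ▸ le_rfl) (hS c)

theorem bddBelow_lipschitzMinorant (hS : ∀ c ∈ S, 0 ≤ c.2) (v : ℝ) :
    BddBelow (range fun c : (insert 0 S : Set (ℝ × ℝ)) =>
      (c : ℝ × ℝ).2 + max (v - (c : ℝ × ℝ).1) 0) :=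
  ⟨0, by
    rintro _ ⟨c, rfl⟩
    exact add_nonneg (snd_nonneg_of_mem_insert_zero hS c.2) (le_max_right _ _)⟩

theorem lipschitzMinorant_le (hS : ∀ c ∈ S, 0 ≤ c.2) {c : ℝ × ℝ} (hc : c ∈ S) :
    lipschitzMinorant S c.1 ≤ c.2 := by
  unfold lipschitzMinorant
  simpa using ciInf_le (bddBelow_lipschitzMinorant hS c.1) ⟨c, mem_insert_of_mem _ hc⟩

theorem lipschitzMinorant_nonneg (hS : ∀ c ∈ S, 0 ≤ c.2) (v : ℝ) :
    0 ≤ lipschitzMinorant S v :=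
  le_ciInf fun c => add_nonneg (snd_nonneg_of_mem_insert_zero hS c.2) (le_max_right _ _)

theorem monotone_lipschitzMinorant (hS : ∀ c ∈ S, 0 ≤ c.2) :
    Monotone (lipschitzMinorant S) := fun v w hvw =>
  le_ciInf fun c => (ciInf_le (bddBelow_lipschitzMinorant hS v) c).trans (by gcongr)

theorem lipschitzWith_lipschitzMinorant (hS : ∀ c ∈ S, 0 ≤ c.2) :
    LipschitzWith 1 (lipschitzMinorant S) := by
  refine LipschitzWith.ciInf (fun c => LipschitzWith.of_le_add_mul 1 fun v w => ?_)
    (bddBelow_lipschitzMinorant hS)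
  rw [Real.dist_eq, NNReal.coe_one, one_mul, add_assoc]
  gcongr
  exact max_le (by linarith [le_max_left (w - (c : ℝ × ℝ).1) 0, le_abs_self (v - w)])
    (by linarith [le_max_right (w - (c : ℝ × ℝ).1) 0, abs_nonneg (v - w)])

theorem lipschitzMinorant_pos (hS : ∀ c ∈ S, 0 ≤ c.2)
    (hS_pos : ∀ ε > 0, ∃ m > 0, ∀ c ∈ S, ε ≤ c.1 → m ≤ c.2) {v : ℝ} (hv : 0 < v) :
    0 < lipschitzMinorant S v := by
  obtain ⟨m, hm, hmS⟩ := hS_pos (v / 2) (half_pos hv)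
  refine (lt_min hm (half_pos hv)).trans_le (le_ciInf fun ⟨c, hc⟩ => ?_)
  have hc2 := snd_nonneg_of_mem_insert_zero hS hc
  rcases le_or_gt (v / 2) c.1 with hvc | hcv
  · have hcS : c ∈ S := hc.resolve_left (by rintro rfl; simp at hvc; linarith)
    exact (min_le_left _ _).trans
      ((hmS c hcS hvc).trans (le_add_of_nonneg_right (le_max_right _ _)))
  · exact (min_le_right _ _).trans (by linarith [le_max_left (v - c.1) 0])

end LipschitzMinorant

theorem exists_pos_forall_le_of_finite {ι : Type*} [Finite ι] (m : ι → ℝ) (hm : ∀ i, 0 < m i) :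
    ∃ m₀ > 0, ∀ i, m₀ ≤ m i := by
  cases isEmpty_or_nonempty ι
  · exact ⟨1, one_pos, isEmptyElim⟩
  · obtain ⟨i₀, hi₀⟩ := Finite.exists_min m
    exact ⟨m i₀, hm i₀, hi₀⟩

theorem exists_supply_rescaling {ι : Type*} [Finite ι] {β α : ℝ → ℝ} {γ γt : ι → ℝ → ℝ}
    (hβ : ClassKInf β) (hα : ClassKInf α) (hγ : ∀ i, ClassKInf (γ i))
    (hγt : ∀ i, ClassKInf (γt i))
    (hO : ∀ i, ∃ M > (0:ℝ), ∃ r₀ ≥ (0:ℝ), ∀ r ≥ r₀, γ i r ≤ M * γt i r) :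
    ∃ p : ℝ → ℝ, Continuous p ∧ Monotone p ∧ (∀ v, 0 ≤ p v) ∧ (∀ v, 0 < v → 0 < p v) ∧
      ∀ i r s, 0 ≤ r → 0 ≤ s → α s ≤ γ i r → p (β s) * γ i r ≤ γt i r := by
  set S : Set (ℝ × ℝ) :=
    {c | ∃ i r s, 0 < r ∧ 0 ≤ s ∧ α s ≤ γ i r ∧ c = (β s, γt i r / γ i r)}
  have hS : ∀ c ∈ S, 0 ≤ c.2 := by
    rintro _ ⟨i, r, s, hr, -, -, rfl⟩
    exact div_nonneg ((hγt i).nonneg hr.le) ((hγ i).nonneg hr.le)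
  have hS_pos : ∀ ε > 0, ∃ m > 0, ∀ c ∈ S, ε ≤ c.1 → m ≤ c.2 := by
    intro ε hε
    obtain ⟨s₀, hs₀, hβs₀⟩ := hβ.exists_pos_le_of_le hε
    have hratio : ∀ i, ∃ m > 0, ∀ r, 0 ≤ r → α s₀ ≤ γ i r → m * γ i r ≤ γt i r := by
      intro i
      obtain ⟨η, hη, hγη⟩ := (hγ i).exists_pos_le_of_le (hα.pos hs₀)
      obtain ⟨m, hm, hmγ⟩ := (hγ i).exists_mul_le (hγt i) (hO i) hη
      exact ⟨m, hm, fun r hr hαγ => hmγ r (hγη r hr hαγ)⟩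
    choose m hm hmγ using hratio
    obtain ⟨m₀, hm₀, hm₀m⟩ := exists_pos_forall_le_of_finite m hm
    refine ⟨m₀, hm₀, ?_⟩
    rintro _ ⟨i, r, s, hr, hs, hαγ, rfl⟩ hεβ
    rw [le_div_iff₀ ((hγ i).pos hr)]
    calc m₀ * γ i r ≤ m i * γ i r :=
          mul_le_mul_of_nonneg_right (hm₀m i) ((hγ i).nonneg hr.le)
      _ ≤ γt i r := hmγ i r hr.le ((hα.monotoneOn hs₀.le hs (hβs₀ s hs hεβ)).trans hαγ)
  refine ⟨lipschitzMinorant S, (lipschitzWith_lipschitzMinorant hS).continuous,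
    monotone_lipschitzMinorant hS, lipschitzMinorant_nonneg hS,
    fun v hv => lipschitzMinorant_pos hS hS_pos hv, fun i r s hr hs hαγ => ?_⟩
  rcases hr.eq_or_lt with rfl | hr
  · simp [(hγ i).2.2.1, (hγt i).2.2.1]
  · have := lipschitzMinorant_le hS ⟨i, r, s, hr, hs, hαγ, rfl⟩
    rwa [le_div_iff₀ ((hγ i).pos hr)] at this

section Primitive

variable {p : ℝ → ℝ}

theorem contDiff_one_primitive (hp : Continuous p) :
    ContDiff ℝ 1 fun s => ∫ t in (0:ℝ)..s, p t := by
  have hderiv : deriv (fun s => ∫ t in (0:ℝ)..s, p t) = p :=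
    funext fun s => (hp.integral_hasStrictDerivAt 0 s).hasDerivAt.deriv
  rw [contDiff_one_iff_deriv, hderiv]
  exact ⟨fun s => (hp.integral_hasStrictDerivAt 0 s).hasDerivAt.differentiableAt, hp⟩

theorem classKInf_primitive (hp : Continuous p) (hp_mono : Monotone p)
    (hp_pos : ∀ s, 0 < s → 0 < p s) : ClassKInf fun s => ∫ t in (0:ℝ)..s, p t := by
  have hsub : ∀ a b : ℝ, (∫ t in (0:ℝ)..b, p t) - ∫ t in (0:ℝ)..a, p t = ∫ t in a..b, p t :=
    fun a b => intervalIntegral.integral_interval_sub_left (hp.intervalIntegrable 0 b)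
      (hp.intervalIntegrable 0 a)
  refine ⟨(contDiff_one_primitive hp).continuous.continuousOn, fun a ha b _ hab => ?_,
    intervalIntegral.integral_same, ?_⟩
  · have := intervalIntegral.intervalIntegral_pos_of_pos_on (hp.intervalIntegrable a b)
      (fun x hx => hp_pos x ((mem_Ici.1 ha).trans_lt hx.1)) hab
    linarith [hsub a b]
  · have hlin : ∀ s ≥ (1:ℝ), (∫ t in (0:ℝ)..1, p t) + p 1 * (s - 1) ≤ ∫ t in (0:ℝ)..s, p t := by
      intro s hs
      have := intervalIntegral.integral_mono_on hs (intervalIntegrable_const (μ := volume))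
        (hp.intervalIntegrable 1 s) fun x hx => hp_mono hx.1
      rw [intervalIntegral.integral_const, smul_eq_mul, mul_comm] at this
      linarith [hsub 1 s]
    refine tendsto_atTop_mono' atTop (eventually_atTop.2 ⟨1, hlin⟩) ?_
    exact tendsto_atTop_add_const_left _ _ <|
      (tendsto_atTop_add_const_right _ _ tendsto_id).const_mul_atTop (hp_pos 1 one_pos)

end Primitive

theorem mul_neg_div_add_le {n a g g' P Plo Phi : ℝ} (hn : 0 < n) (ha : 0 ≤ a) (hg : 0 ≤ g)
    (hg' : 0 ≤ g') (hP : 0 ≤ P) (hPlo : Plo ≤ P) (hPhi : P ≤ Phi)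
    (hkey : (2 * n)⁻¹ * a ≤ g → Phi * g ≤ g') :
    P * (-a / n + g) ≤ -(Plo / 2 * a) / n + g' := by
  rcases le_or_gt ((2 * n)⁻¹ * a) g with hag | hga
  · have hPg : P * g ≤ g' := (mul_le_mul_of_nonneg_right hPhi hg).trans (hkey hag)
    have hPa : Plo / 2 * a ≤ P * a := by nlinarith
    calc P * (-a / n + g) = -(P * a) / n + P * g := by ring
      _ ≤ -(Plo / 2 * a) / n + g' := by gcongr
  · calc P * (-a / n + g) ≤ P * (-a / n + (2 * n)⁻¹ * a) := by gcongr
      _ = -(P / 2 * a) / n := by field_simp; ring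
      _ ≤ -(Plo / 2 * a) / n := by gcongr
      _ ≤ -(Plo / 2 * a) / n + g' := le_add_of_nonneg_right hg'

theorem Fin.sum_div_add {N : ℕ} (hN : N ≠ 0) (c : ℝ) (x : Fin N → ℝ) :
    ∑ i, (c / N + x i) = c + ∑ i, x i := by
  rw [Finset.sum_add_distrib, Finset.sum_const, Finset.card_univ, Fintype.card_fin, nsmul_eq_mul,
    mul_div_cancel₀ _ (Nat.cast_ne_zero.2 hN)]

theorem stmt9_general (n N : ℕ) (hN : 0 < N) (nu : Fin N → ℕ)
    (f : EuclideanSpace ℝ (Fin n) →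
      (∀ i : Fin N, EuclideanSpace ℝ (Fin (nu i))) → EuclideanSpace ℝ (Fin n))
    (V : EuclideanSpace ℝ (Fin n) → ℝ) (hV1 : ContDiff ℝ 1 V)
    (αlowV αupV α : ℝ → ℝ) (γ : Fin N → ℝ → ℝ)
    (hαlowV : ClassKInf αlowV) (hαupV : ClassKInf αupV) (hα : ClassKInf α)
    (hγ : ∀ i, ClassKInf (γ i))
    (hVb : ∀ x, αlowV ‖x‖ ≤ V x ∧ V x ≤ αupV ‖x‖)
    (hVflow : ∀ (x : EuclideanSpace ℝ (Fin n))
      (u : ∀ i : Fin N, EuclideanSpace ℝ (Fin (nu i))),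
      fderiv ℝ V x (f x u) ≤ -α ‖x‖ + ∑ i, γ i ‖u i‖)
    (γt : Fin N → ℝ → ℝ) (hγt : ∀ i, ClassKInf (γt i))
    (hO : ∀ i, ∃ M > (0:ℝ), ∃ r₀ ≥ (0:ℝ), ∀ r ≥ r₀, γ i r ≤ M * γt i r) :
    ∃ (W : EuclideanSpace ℝ (Fin n) → ℝ) (αlowW αupW αt : ℝ → ℝ),
      ContDiff ℝ 1 W ∧ (∀ x, 0 ≤ W x) ∧
      ClassKInf αlowW ∧ ClassKInf αupW ∧ ClassKInf αt ∧
      (∀ x, αlowW ‖x‖ ≤ W x ∧ W x ≤ αupW ‖x‖) ∧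
      (∀ (x : EuclideanSpace ℝ (Fin n))
        (u : ∀ i : Fin N, EuclideanSpace ℝ (Fin (nu i))),
        fderiv ℝ W x (f x u) ≤ -αt ‖x‖ + ∑ i, γt i ‖u i‖) := by
  have hN' : (0:ℝ) < N := Nat.cast_pos.2 hN
  obtain ⟨p, hp, hp_mono, hp_nonneg, hp_pos, hp_key⟩ := exists_supply_rescaling hαupV
    (hα.mul_left (q := fun _ => (2 * (N:ℝ))⁻¹) continuousOn_const monotoneOn_const
      fun _ _ => by positivity) hγ hγt hO
  set ρ : ℝ → ℝ := fun s => ∫ t in (0:ℝ)..s, p t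
  have hρ : ClassKInf ρ := classKInf_primitive hp hp_mono hp_pos
  have hαt : ClassKInf fun t => p (αlowV t) / 2 * α t :=
    hα.mul_left ((hp.comp_continuousOn hαlowV.1).div_const 2)
      (fun a ha b hb hab => by gcongr; exact hp_mono (hαlowV.monotoneOn ha hb hab))
      fun t ht => half_pos (hp_pos _ (hαlowV.pos ht))
  have hV0 : ∀ x, 0 ≤ V x := fun x => (hαlowV.nonneg (norm_nonneg x)).trans (hVb x).1
  refine ⟨ρ ∘ V, ρ ∘ αlowV, ρ ∘ αupV, _, (contDiff_one_primitive hp).comp hV1,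
    fun x => hρ.nonneg (hV0 x), hρ.comp hαlowV, hρ.comp hαupV, hαt,
    fun x => ⟨hρ.monotoneOn (hαlowV.nonneg (norm_nonneg x)) (hV0 x) (hVb x).1,
      hρ.monotoneOn (hV0 x) ((hV0 x).trans (hVb x).2) (hVb x).2⟩, fun x u => ?_⟩
  have hW : HasFDerivAt (ρ ∘ V) (p (V x) • fderiv ℝ V x) x :=
    (hp.integral_hasStrictDerivAt 0 (V x)).hasDerivAt.comp_hasFDerivAt x
      (hV1.differentiable one_ne_zero x).hasFDerivAt
  rw [hW.fderiv, smul_apply, smul_eq_mul]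
  calc p (V x) * fderiv ℝ V x (f x u)
      ≤ p (V x) * (-α ‖x‖ + ∑ i, γ i ‖u i‖) :=
        mul_le_mul_of_nonneg_left (hVflow x u) (hp_nonneg _)
    _ = ∑ i, p (V x) * (-α ‖x‖ / N + γ i ‖u i‖) := by
        rw [← Finset.mul_sum, Fin.sum_div_add hN.ne']
    _ ≤ ∑ i, (-(p (αlowV ‖x‖) / 2 * α ‖x‖) / N + γt i ‖u i‖) :=
        Finset.sum_le_sum fun i _ => mul_neg_div_add_le hN' (hα.nonneg (norm_nonneg x))
          ((hγ i).nonneg (norm_nonneg _)) ((hγt i).nonneg (norm_nonneg _)) (hp_nonneg _)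
          (hp_mono (hVb x).1) (hp_mono (hVb x).2)
          (hp_key i _ _ (norm_nonneg _) (norm_nonneg x))
    _ = -(p (αlowV ‖x‖) / 2 * α ‖x‖) + ∑ i, γt i ‖u i‖ := Fin.sum_div_add hN.ne' _ _

/-- Lemma 2 (Appendix) of the paper: multiple-input change of supply rates for
ISS-Lyapunov functions. If the gains `γ̃ᵢ` dominate `γᵢ` at infinity, then there is
a new continuously differentiable ISS-Lyapunov function `W` with supply rates
`γ̃ᵢ` and some new decay rate `α̃`. -/
theorem stmt9 (n N : ℕ) (hn : 0 < n) (hN : 0 < N) (nu : Fin N → ℕ)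
    (hnu : ∀ i, 0 < nu i)
    (f : EuclideanSpace ℝ (Fin n) →
      (∀ i : Fin N, EuclideanSpace ℝ (Fin (nu i))) → EuclideanSpace ℝ (Fin n))
    (V : EuclideanSpace ℝ (Fin n) → ℝ) (hV1 : ContDiff ℝ 1 V) (hV0 : ∀ x, 0 ≤ V x)
    (αlowV αupV α : ℝ → ℝ) (γ : Fin N → ℝ → ℝ)
    (hαlowV : ClassKInf αlowV) (hαupV : ClassKInf αupV) (hα : ClassKInf α)
    (hγ : ∀ i, ClassKInf (γ i))
    (hVb : ∀ x, αlowV ‖x‖ ≤ V x ∧ V x ≤ αupV ‖x‖)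
    (hVflow : ∀ (x : EuclideanSpace ℝ (Fin n))
      (u : ∀ i : Fin N, EuclideanSpace ℝ (Fin (nu i))),
      fderiv ℝ V x (f x u) ≤ -α ‖x‖ + ∑ i, γ i ‖u i‖)
    (γt : Fin N → ℝ → ℝ) (hγt : ∀ i, ClassKInf (γt i))
    (hO : ∀ i, ∃ M > (0:ℝ), ∃ r₀ ≥ (0:ℝ), ∀ r ≥ r₀, γ i r ≤ M * γt i r) :
    ∃ (W : EuclideanSpace ℝ (Fin n) → ℝ) (αlowW αupW αt : ℝ → ℝ),
      ContDiff ℝ 1 W ∧ (∀ x, 0 ≤ W x) ∧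
      ClassKInf αlowW ∧ ClassKInf αupW ∧ ClassKInf αt ∧
      (∀ x, αlowW ‖x‖ ≤ W x ∧ W x ≤ αupW ‖x‖) ∧
      (∀ (x : EuclideanSpace ℝ (Fin n))
        (u : ∀ i : Fin N, EuclideanSpace ℝ (Fin (nu i))),
        fderiv ℝ W x (f x u) ≤ -αt ‖x‖ + ∑ i, γt i ‖u i‖) :=
  stmt9_general n N hN nu f V hV1 αlowV αupV α γ hαlowV hαupV hα hγ hVb hVflow γt hγt hO
end

section
/- Under the ISS-Lyapunov assumption and with parameters chosen as in Theorem 1 (ν > 0; σᵢ* > 0, cᵢ* ≥ 0 with σᵢ*cᵢ* < 1; dᵢ > σᵢ*/(1−σᵢ*cᵢ*); εᵢ* > 0 with Σ(1+dᵢcᵢ*)εᵢ* ≤ ν; σᵢ ∈ [0,σᵢ*], cᵢ ∈ [0,cᵢ*], εᵢ ∈ (0,εᵢ*]; δᵢ := dᵢ − σᵢ*(1+dᵢcᵢ*); d̄ := max{d₁,…,d_N}), let α_U be a class-K∞ function with α_U(s) ≤ α(s) for all s ≥ 0, and let ψ_mod be a class-K∞ function such that α_U(a+b) − α_U(a) ≤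 ψ_mod(b) for all a, b ≥ 0. Suppose the class-K∞ functions αᵢ are chosen so that min{δ₁α₁(s/(d̄N)), …, δ_Nα_N(s/(d̄N))} ≥ ψ_mod(s) for all s ≥ 0. Then, for all x, z, u, v, e = (e₁,…,e_N) and all η ∈ ℝ^N with ηᵢ ≥ 0 satisfying γᵢ(|eᵢ|) ≤ σᵢαᵢ(ηᵢ) + εᵢ for every i, ⟨∇V(x,z), (f_p(x,u,v), f_o(z,u,h(x)+e, h(ψ(z))))⟩ + Σ_{i=1}^N dᵢ(−αᵢ(ηᵢ) + cᵢγᵢ(|eᵢ|)) ≤ −α_U(V(x,z) + Σ_{i=1}^N dᵢηᵢ) + ν + θ(|v|). -/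
open Real Filter MeasureTheory

/-- Lemma 3 (Appendix) of the paper, global form: if the prescribed decay rate
`α_U ≤ α` has class-K∞ modulus of continuity `ψ_mod` and the `αᵢ` are chosen so
that `minᵢ δᵢαᵢ(s/(d̄N)) ≥ ψ_mod(s)`, then the decay rate `α_U` is recovered for
`U = V + Σ dᵢηᵢ` on the flow set. -/
theorem stmt11
    (N nx nz nu nv : ℕ) (hN : 0 < N) (ny : Fin N → ℕ)
    (fp : EuclideanSpace ℝ (Fin nx) → EuclideanSpace ℝ (Fin nu) →
      EuclideanSpace ℝ (Fin nv) → EuclideanSpace ℝ (Fin nx))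
    (fo : EuclideanSpace ℝ (Fin nz) → EuclideanSpace ℝ (Fin nu) →
      (PiLp 2 fun i : Fin N => EuclideanSpace ℝ (Fin (ny i))) →
      (PiLp 2 fun i : Fin N => EuclideanSpace ℝ (Fin (ny i))) →
      EuclideanSpace ℝ (Fin nz))
    (h : EuclideanSpace ℝ (Fin nx) →
      PiLp 2 fun i : Fin N => EuclideanSpace ℝ (Fin (ny i)))
    (ψ : EuclideanSpace ℝ (Fin nz) → EuclideanSpace ℝ (Fin nx))
    (ψR : EuclideanSpace ℝ (Fin nx) → EuclideanSpace ℝ (Fin nz))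
    -- ISS-Lyapunov assumption (Assumption 2)
    (V : EuclideanSpace ℝ (Fin nx) × EuclideanSpace ℝ (Fin nz) → ℝ)
    (αlow αup α θ : ℝ → ℝ) (γ : Fin N → ℝ → ℝ)
    (hV1 : ContDiff ℝ 1 V) (hV0 : ∀ p, 0 ≤ V p)
    (hαlow : ClassKInf αlow) (hαup : ClassKInf αup) (hα : ClassKInf α)
    (hθ : ClassKInf θ) (hγ : ∀ i, ClassKInf (γ i))
    (hVb : ∀ (x : EuclideanSpace ℝ (Fin nx)) (z : EuclideanSpace ℝ (Fin nz)),
      αlow ‖x - ψ z‖ ≤ V (x, z) ∧ V (x, z) ≤ αup ‖ψR x - z‖)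
    (hVflow : ∀ (x : EuclideanSpace ℝ (Fin nx)) (z : EuclideanSpace ℝ (Fin nz))
      (u : EuclideanSpace ℝ (Fin nu)) (v : EuclideanSpace ℝ (Fin nv))
      (e : PiLp 2 fun i : Fin N => EuclideanSpace ℝ (Fin (ny i))),
      fderiv ℝ V (x, z) (fp x u v, fo z u (h x + e) (h (ψ z))) ≤
        -α (V (x, z)) + (∑ i, γ i ‖e i‖) + θ ‖v‖)
    -- parameter selection of Theorem 1
    (ν : ℝ) (hν : 0 < ν)
    (σs cs d εs : Fin N → ℝ)
    (hσs : ∀ i, 0 < σs i) (hcs : ∀ i, 0 ≤ cs i) (hσscs : ∀ i, σs i * cs i < 1)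
    (hd : ∀ i, σs i / (1 - σs i * cs i) < d i)
    (hεs : ∀ i, 0 < εs i) (hεν : ∑ i, (1 + d i * cs i) * εs i ≤ ν)
    (αi : Fin N → ℝ → ℝ) (hαi : ∀ i, ClassKInf (αi i))
    (σ c ε b : Fin N → ℝ)
    (hσ : ∀ i, σ i ∈ Set.Icc 0 (σs i)) (hc : ∀ i, c i ∈ Set.Icc 0 (cs i))
    (hε : ∀ i, ε i ∈ Set.Ioc 0 (εs i)) (hb : ∀ i, b i ∈ Set.Icc 0 1)
    (δ : Fin N → ℝ) (hδ : ∀ i, δ i = d i - σs i * (1 + d i * cs i))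
    (dbar : ℝ)
    (hdbar : dbar = Finset.univ.sup'
      (Finset.univ_nonempty_iff.mpr (Fin.pos_iff_nonempty.mp hN)) d)
    (αUf ψmod : ℝ → ℝ) (hαUf : ClassKInf αUf) (hψmod : ClassKInf ψmod)
    (hαUle : ∀ s : ℝ, 0 ≤ s → αUf s ≤ α s)
    (hmod : ∀ a b : ℝ, 0 ≤ a → 0 ≤ b → αUf (a + b) - αUf a ≤ ψmod b)
    (hαibig : ∀ s : ℝ, 0 ≤ s →
      ψmod s ≤ Finset.univ.inf'
        (Finset.univ_nonempty_iff.mpr (Fin.pos_iff_nonempty.mp hN))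
        (fun i => δ i * αi i (s / (dbar * (N : ℝ))))) :
    ∀ (x : EuclideanSpace ℝ (Fin nx)) (z : EuclideanSpace ℝ (Fin nz))
      (u : EuclideanSpace ℝ (Fin nu)) (v : EuclideanSpace ℝ (Fin nv))
      (e : PiLp 2 fun i : Fin N => EuclideanSpace ℝ (Fin (ny i)))
      (η : Fin N → ℝ), (∀ i, 0 ≤ η i) →
      (∀ i, γ i ‖e i‖ ≤ σ i * αi i (η i) + ε i) →
      fderiv ℝ V (x, z) (fp x u v, fo z u (h x + e) (h (ψ z))) +
          ∑ i, d i * (-(αi i (η i)) + c i * γ i ‖e i‖) ≤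
        -αUf (V (x, z) + ∑ i, d i * η i) + ν + θ ‖v‖ := by
  intro x z u v e η hη hγe
  have mono : ∀ f : ℝ → ℝ, ClassKInf f → ∀ a b : ℝ, 0 ≤ a → a ≤ b → f a ≤ f b := by
    intro f hf a b ha hab
    exact hf.2.1.monotoneOn ha (le_trans ha hab) hab
  have nonneg : ∀ f : ℝ → ℝ, ClassKInf f → ∀ a : ℝ, 0 ≤ a → 0 ≤ f a := by
    intro f hf a ha
    have := mono f hf 0 a le_rfl ha
    rwa [hf.2.2.1] at this
  have hdpos : ∀ i, 0 < d i := by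
    intro i
    have h1 : 0 < 1 - σs i * cs i := by linarith [hσscs i]
    have h2 : 0 < σs i / (1 - σs i * cs i) := div_pos (hσs i) h1
    linarith [hd i]
  have hδpos : ∀ i, 0 < δ i := by
    intro i
    have h1 : 0 < 1 - σs i * cs i := by linarith [hσscs i]
    have h2 := (div_lt_iff₀ h1).mp (hd i)
    rw [hδ i]; nlinarith
  have hdbar_ge : ∀ i, d i ≤ dbar := by
    intro i; rw [hdbar]; exact Finset.le_sup' d (Finset.mem_univ i)
  have hdbarpos : 0 < dbar := lt_of_lt_of_le (hdpos ⟨0, hN⟩) (hdbar_ge ⟨0, hN⟩)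
  have hNpos : (0:ℝ) < (N:ℝ) := by exact_mod_cast hN
  set W := V (x, z) with hWdef
  have hW : 0 ≤ W := hV0 _
  set S := ∑ i, d i * η i with hSdef
  have hS : 0 ≤ S := Finset.sum_nonneg fun i _ => mul_nonneg (hdpos i).le (hη i)
  have hαiη : ∀ i, 0 ≤ αi i (η i) := fun i => nonneg _ (hαi i) _ (hη i)
  have hγnn : ∀ i, 0 ≤ γ i ‖e i‖ := fun i => nonneg _ (hγ i) _ (norm_nonneg _)
  obtain ⟨j, -, hj⟩ := Finset.exists_max_image Finset.univ η
    ⟨⟨0, hN⟩, Finset.mem_univ _⟩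
  have hSle : S ≤ dbar * (N : ℝ) * η j := by
    have hterm : ∀ i ∈ Finset.univ, d i * η i ≤ dbar * η j := fun i _ =>
      mul_le_mul (hdbar_ge i) (hj i (Finset.mem_univ i)) (hη i) hdbarpos.le
    calc S ≤ ∑ _i : Fin N, dbar * η j := Finset.sum_le_sum hterm
      _ = dbar * (N : ℝ) * η j := by
          rw [Finset.sum_const, Finset.card_univ, Fintype.card_fin, nsmul_eq_mul]; ring
  have hηj : 0 ≤ η j := hη j
  have hquot : S / (dbar * (N : ℝ)) ≤ η j := by
    rw [div_le_iff₀ (by positivity)]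
    nlinarith
  have hψS : ψmod S ≤ ∑ i, δ i * αi i (η i) := by
    have h1 := hαibig S hS
    have h2 : (Finset.univ.inf'
        (Finset.univ_nonempty_iff.mpr (Fin.pos_iff_nonempty.mp hN))
        fun i => δ i * αi i (S / (dbar * (N : ℝ)))) ≤
        δ j * αi j (S / (dbar * (N : ℝ))) :=
      Finset.inf'_le _ (Finset.mem_univ j)
    have h3 : αi j (S / (dbar * (N : ℝ))) ≤ αi j (η j) :=
      mono _ (hαi j) _ _ (by positivity) hquot
    have h4 : δ j * αi j (η j) ≤ ∑ i, δ i * αi i (η i) :=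
      Finset.single_le_sum (fun i _ => mul_nonneg (hδpos i).le (hαiη i))
        (Finset.mem_univ j)
    have h5 := mul_le_mul_of_nonneg_left h3 (hδpos j).le
    linarith
  have hU : αUf (W + S) ≤ α W + ∑ i, δ i * αi i (η i) := by
    have h1 := hmod W S hW hS
    have h2 := hαUle W hW
    linarith
  have hsum : (∑ i, γ i ‖e i‖) + ∑ i, d i * (-(αi i (η i)) + c i * γ i ‖e i‖) ≤
      -(∑ i, δ i * αi i (η i)) + ν := by
    have key : ∀ i ∈ Finset.univ,
        γ i ‖e i‖ + d i * (-(αi i (η i)) + c i * γ i ‖e i‖) ≤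
        -(δ i * αi i (η i)) + (1 + d i * cs i) * εs i := by
      intro i _
      have hγi : γ i ‖e i‖ ≤ σs i * αi i (η i) + εs i := by
        have h0 := hγe i
        have h1 : σ i * αi i (η i) ≤ σs i * αi i (η i) :=
          mul_le_mul_of_nonneg_right (hσ i).2 (hαiη i)
        linarith [(hε i).2]
      have hcoef : (0:ℝ) ≤ 1 + d i * cs i := by nlinarith [(hcs i), (hdpos i).le]
      have h5 : d i * c i * γ i ‖e i‖ ≤ d i * cs i * γ i ‖e i‖ :=
        mul_le_mul_of_nonneg_right
          (mul_le_mul_of_nonneg_left (hc i).2 (hdpos i).le) (hγnn i)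
      have h6 : (1 + d i * cs i) * γ i ‖e i‖ ≤
          (1 + d i * cs i) * (σs i * αi i (η i) + εs i) :=
        mul_le_mul_of_nonneg_left hγi hcoef
      rw [hδ i]
      nlinarith
    have h7 := Finset.sum_le_sum key
    rw [Finset.sum_add_distrib, Finset.sum_add_distrib, Finset.sum_neg_distrib] at h7
    linarith [hεν]
  have hflow := hVflow x z u v e
  have hαW : α W + ∑ i, δ i * αi i (η i) ≥ αUf (W + S) := hU
  calc fderiv ℝ V (x, z) (fp x u v, fo z u (h x + e) (h (ψ z))) +
        ∑ i, d i * (-(αi i (η i)) + c i * γ i ‖e i‖)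
      ≤ (-α W + (∑ i, γ i ‖e i‖) + θ ‖v‖) +
        ∑ i, d i * (-(αi i (η i)) + c i * γ i ‖e i‖) := by linarith
    _ ≤ -α W - (∑ i, δ i * αi i (η i)) + ν + θ ‖v‖ := by linarith
    _ ≤ -αUf (W + S) + ν + θ ‖v‖ := by linarith
    _ = -αUf (V (x, z) + ∑ i, d i * η i) + ν + θ ‖v‖ := by rw [hWdef, hSdef]
end
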